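/- arXiv:2412.07569 — 10 statements merged into one kernel-verified Lean document; each statement's English description precedes it below -/
import Mathlib

section
/- Let F be a field of characteristic 0, n₁ ≥ 1 and m ≥ 1 integers, and let B = F[z_{j,i} : 1 ≤ i ≤ n₁, 1 ≤ j ≤ m] be a polynomial ring. Define the algebra homomorphism φ_x : B → F[x₁,...,x_{n₁}, x'₁,...,x'_m] by φ_x(z_{j,i}) = x_i · x'_j. Then the kernel of φ_x equals the ideal generated by all 2×2 minors z_{j₁,i₁} z_{j₂,i₂} − z_{j₁,i₂} z_{j₂,i₁} of the matrix (z_{j,i}). -/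
/-!
An algebra map sending each variable to a monomial sends monomials to monomials, so its kernel
is spanned by the binomials `z^d - z^d'` whose exponents have the same image. For
`z_{j,i} ↦ x_i x'_j` this means `d` and `d'` have the same row and column multisets. Two such
monomials are joined by a chain of moves exchanging the columns of two factors `z_{j,i'}`,
`z_{j',i}`, and each move changes the monomial by a multiple of a 2×2 minor.
-/

open MvPolynomial

namespace MvPolynomial

variable {R σ τ : Type*} [CommRing R]

theorem aeval_monomial_monomial (w : σ → τ →₀ ℕ) (d : σ →₀ ℕ) (c : R) :
    aeval (fun i => monomial (w i) (1 : R)) (monomial d c) =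
      monomial (Finsupp.linearCombination ℕ w d) c := by
  rw [aeval_monomial, Finsupp.linearCombination_apply, monomial_finsupp_sum_index, algebraMap_eq]
  simp only [monomial_pow, one_pow]

theorem ker_aeval_monomial (w : σ → τ →₀ ℕ) :
    RingHom.ker (aeval (fun i => monomial (w i) (1 : R))) =
      Ideal.span {p | ∃ d d', Finsupp.linearCombination ℕ w d =
        Finsupp.linearCombination ℕ w d' ∧ p = monomial d (1 : R) - monomial d' 1} := by
  classical
  set E := Finsupp.linearCombination ℕ w
  refine le_antisymm (fun p hp => ?_) (Ideal.span_le.2 ?_)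
  · -- With `r d` a representative of the fibre of `E` through `d`, `p` is congruent to
    -- `∑ c_d z^(r d)`, whose coefficients are fibre sums of coefficients of `p`, i.e. the
    -- coefficients of its image, hence zero.
    let r : (σ →₀ ℕ) → σ →₀ ℕ := fun d => Function.invFun E (E d)
    have hEr : ∀ d, E (r d) = E d := fun d => Function.invFun_eq ⟨d, rfl⟩
    have hr : ∀ d e, r d = e ↔ E d = E e ∧ r e = e := fun d e =>
      ⟨fun h => h ▸ ⟨(hEr d).symm, show Function.invFun E (E (r d)) = r d by rw [hEr]⟩,
        fun ⟨h, he⟩ => he ▸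
          show Function.invFun E (E d) = Function.invFun E (E e) by rw [h]⟩
    have hcoeff : ∀ e, coeff (E e) (aeval (fun i => monomial (w i) (1 : R)) p) =
        ∑ d ∈ p.support, if E d = E e then coeff d p else 0 := fun e => by
      conv_lhs => rw [p.as_sum]
      simp only [map_sum, aeval_monomial_monomial, coeff_sum, coeff_monomial]
      rfl
    have hq : ∑ d ∈ p.support, monomial (r d) (coeff d p) = 0 := by
      ext e
      rw [coeff_sum, coeff_zero]
      by_cases he : r e = e
      · simp only [coeff_monomial, fun d => (hr d e).trans (and_iff_left he)]
        rw [← hcoeff, RingHom.mem_ker.1 hp, coeff_zero]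
      · simp [coeff_monomial, fun d => mt (fun h => ((hr d e).1 h).2) he]
    have hp_eq : p = ∑ d ∈ p.support, C (coeff d p) * (monomial d 1 - monomial (r d) 1) := by
      nth_rewrite 1 [p.as_sum, ← sub_zero (∑ _ ∈ _, _), ← hq]
      rw [← Finset.sum_sub_distrib]
      simp only [mul_sub, C_mul_monomial, mul_one]
    rw [hp_eq]
    exact Ideal.sum_mem _ fun d _ =>
      Ideal.mul_mem_left _ _ (Ideal.subset_span ⟨d, r d, (hEr d).symm, rfl⟩)
  · rintro _ ⟨d, d', h, rfl⟩
    simp only [SetLike.mem_coe, RingHom.mem_ker, map_sub, aeval_monomial_monomial]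
    rw [h, sub_self]

theorem monomial_one_eq_prod_map_X (d : σ →₀ ℕ) :
    monomial d (1 : R) = (d.toMultiset.map X).prod := by
  induction d using Finsupp.induction_linear with
  | zero => simp
  | add d e hd he => rw [← one_mul (1 : R), ← monomial_mul, hd, he, Finsupp.toMultiset_add,
      Multiset.map_add, Multiset.prod_add]
  | single i n => rw [Finsupp.toMultiset_single, Multiset.nsmul_singleton, Multiset.map_replicate,
      Multiset.prod_replicate, X_pow_eq_monomial]

section TwoMinors

variable (R κ ι : Type*) [CommRing R]

noncomputable def twoMinors : Ideal (MvPolynomial (κ × ι) R) :=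
  Ideal.span {p | ∃ (j₁ j₂ : κ) (i₁ i₂ : ι),
    p = X (j₁, i₁) * X (j₂, i₂) - X (j₁, i₂) * X (j₂, i₁)}

noncomputable def segreWeight (p : κ × ι) : (ι ⊕ κ) →₀ ℕ :=
  Finsupp.single (Sum.inl p.2) 1 + Finsupp.single (Sum.inr p.1) 1

variable {R κ ι}

theorem X_inl_mul_X_inr (p : κ × ι) :
    (X (Sum.inl p.2) * X (Sum.inr p.1) : MvPolynomial (ι ⊕ κ) R) =
      monomial (segreWeight κ ι p) 1 := by
  rw [X, X, monomial_mul, one_mul, segreWeight]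

theorem prod_map_X_sub_prod_map_X_mem_twoMinors {s t : Multiset (κ × ι)}
    (hfst : s.map Prod.fst = t.map Prod.fst) (hsnd : s.map Prod.snd = t.map Prod.snd) :
    (s.map X).prod - (t.map X).prod ∈ twoMinors R κ ι := by
  induction s using Multiset.induction_on generalizing t with
  | empty =>
    obtain rfl : t = 0 := by simpa [eq_comm] using hfst
    simp
  | cons a s ih =>
    obtain ⟨j, i⟩ := a
    by_cases hmem : (j, i) ∈ t
    · obtain ⟨t, rfl⟩ := Multiset.exists_cons_of_mem hmem
      simp only [Multiset.map_cons, Multiset.cons_inj_right, Multiset.prod_cons] at hfst hsnd ⊢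
      rw [← mul_sub]
      exact Ideal.mul_mem_left _ _ (ih hfst hsnd)
    obtain ⟨⟨j₁, i'⟩, hi', hj₁⟩ := Multiset.mem_map.1 (hfst ▸ Multiset.mem_map_of_mem
      Prod.fst (Multiset.mem_cons_self (j, i) s))
    obtain rfl : j = j₁ := hj₁.symm
    obtain ⟨⟨j', i₁⟩, hj', hi₁⟩ := Multiset.mem_map.1 (hsnd ▸ Multiset.mem_map_of_mem
      Prod.snd (Multiset.mem_cons_self (j, i) s))
    obtain rfl : i = i₁ := hi₁.symm
    obtain ⟨u, rfl⟩ := Multiset.exists_cons_of_mem hi'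
    have hj'u : (j', i) ∈ u := (Multiset.mem_cons.1 hj').resolve_left fun h => by
      obtain ⟨rfl, rfl⟩ := Prod.mk.inj h
      exact hmem hi'
    obtain ⟨t, rfl⟩ := Multiset.exists_cons_of_mem hj'u
    -- exchange the columns of `(j, i')` and `(j', i)` in `t`, making it start with `(j, i)`
    have hfst' : s.map Prod.fst = ((j', i') ::ₘ t).map Prod.fst := by
      simpa using hfst
    have hsnd' : s.map Prod.snd = ((j', i') ::ₘ t).map Prod.snd := by
      simpa [Multiset.cons_swap i'] using hsnd
    have hminor : X (j, i) * X (j', i') - X (j, i') * X (j', i) ∈ twoMinors R κ ι :=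
      Ideal.subset_span ⟨j, j', i, i', rfl⟩
    have key := Ideal.add_mem _ (Ideal.mul_mem_left _ (X (j, i)) (ih hfst' hsnd'))
      (Ideal.mul_mem_right ((t.map X).prod) _ hminor)
    simp only [Multiset.map_cons, Multiset.prod_cons] at key ⊢
    convert key using 1
    ring

theorem monomial_sub_monomial_mem_twoMinors {d d' : κ × ι →₀ ℕ}
    (hfst : d.mapDomain Prod.fst = d'.mapDomain Prod.fst)
    (hsnd : d.mapDomain Prod.snd = d'.mapDomain Prod.snd) :
    monomial d (1 : R) - monomial d' 1 ∈ twoMinors R κ ι := by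
  rw [monomial_one_eq_prod_map_X, monomial_one_eq_prod_map_X]
  apply prod_map_X_sub_prod_map_X_mem_twoMinors <;>
    simp only [Finsupp.toMultiset_map, hfst, hsnd]

theorem linearCombination_segreWeight (d : κ × ι →₀ ℕ) :
    Finsupp.linearCombination ℕ (segreWeight κ ι) d =
      (d.mapDomain Prod.snd).sumElim (d.mapDomain Prod.fst) := by
  rw [Finsupp.sumElim_eq_add, Finsupp.linearCombination_apply, ← Finsupp.mapDomain_comp,
    ← Finsupp.mapDomain_comp, Finsupp.mapDomain, Finsupp.mapDomain, ← Finsupp.sum_add]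
  simp [segreWeight, smul_add]

theorem ker_aeval_X_inl_mul_X_inr :
    RingHom.ker (aeval (R := R) fun p : κ × ι => X (Sum.inl p.2) * X (Sum.inr p.1) :
      MvPolynomial (κ × ι) R →ₐ[R] MvPolynomial (ι ⊕ κ) R) = twoMinors R κ ι := by
  refine le_antisymm ?_ (Ideal.span_le.2 ?_)
  · simp only [X_inl_mul_X_inr]
    rw [ker_aeval_monomial, Ideal.span_le]
    rintro _ ⟨d, d', h, rfl⟩
    rw [linearCombination_segreWeight, linearCombination_segreWeight] at h
    exact monomial_sub_monomial_mem_twoMinors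
      (by simpa using congrArg (Finsupp.comapDomain Sum.inr · Sum.inr_injective.injOn) h)
      (by simpa using congrArg (Finsupp.comapDomain Sum.inl · Sum.inl_injective.injOn) h)
  · rintro _ ⟨j₁, j₂, i₁, i₂, rfl⟩
    simp only [SetLike.mem_coe, RingHom.mem_ker, map_sub, map_mul, aeval_X]
    ring

end TwoMinors

end MvPolynomial

theorem kernel_phi_x_eq_two_minors_general (F : Type*) [Field F]
    (n₁ m : ℕ)
    (φx : MvPolynomial (Fin m × Fin n₁) F →ₐ[F] MvPolynomial (Fin n₁ ⊕ Fin m) F)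
    (hφx : φx = aeval (fun p : Fin m × Fin n₁ => X (Sum.inl p.2) * X (Sum.inr p.1))) :
    RingHom.ker φx.toRingHom =
      Ideal.span { p : MvPolynomial (Fin m × Fin n₁) F |
        ∃ (j₁ j₂ : Fin m) (i₁ i₂ : Fin n₁),
          p = X (j₁, i₁) * X (j₂, i₂) - X (j₁, i₂) * X (j₂, i₁) } := by
  subst hφx
  exact ker_aeval_X_inl_mul_X_inr

/-- the kernel of the algebra homomorphism `φ_x` sending `z_{j,i}` to
`x_i * x'_j` equals the ideal generated by the 2×2 minors of the matrix `(z_{j,i})`. -/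
theorem kernel_phi_x_eq_two_minors (F : Type*) [Field F] [CharZero F]
    (n₁ m : ℕ) (hn : 1 ≤ n₁) (hm : 1 ≤ m)
    (φx : MvPolynomial (Fin m × Fin n₁) F →ₐ[F] MvPolynomial (Fin n₁ ⊕ Fin m) F)
    (hφx : φx = aeval (fun p : Fin m × Fin n₁ => X (Sum.inl p.2) * X (Sum.inr p.1))) :
    RingHom.ker φx.toRingHom =
      Ideal.span { p : MvPolynomial (Fin m × Fin n₁) F |
        ∃ (j₁ j₂ : Fin m) (i₁ i₂ : Fin n₁),
          p = X (j₁, i₁) * X (j₂, i₂) - X (j₁, i₂) * X (j₂, i₁) } :=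
  kernel_phi_x_eq_two_minors_general F n₁ m φx hφx
end

section
/- Let F be a field of characteristic 0 and let A = F[x₁,...,xₙ,y₁,...,yₙ]. Fix integers 1 ≤ n₁ ≤ n₂ ≤ n and define the twisted representation of sl(n) on A by π(E_{i,j}) = E^x_{i,j} − E^y_{j,i}, where E^x_{i,j} = −x_j∂_{x_i} − δ_{ij} if i,j ≤ n₁; = ∂_{x_i}∂_{x_j} if i ≤ n₁ < j; = −x_i x_j if j ≤ n₁ < i; = x_i∂_{x_j} if i,j > n₁; and E^y_{i,j} = y_i∂_{y_j} if i,j ≤ n₂; = −y_i y_j if i ≤ n₂ < j; = ∂_{y_i}∂_{y_j} if j ≤ n₂ < i; = −y_j∂_{y_i} − δ_{ij} if i,j > n₂. Then π is a Lie algebra homomorphism: π([E_{i,j}, E_{k,l}]) = [π(E_{i,j}), π(E_{k,l})] for all i≠j and k≠l. -/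
open MvPolynomial

namespace Stmt2

variable (F : Type*) [Field F] [CharZero F] (n n₁ n₂ : ℕ)

/-- The polynomial algebra `A = F[x₁,...,xₙ,y₁,...,yₙ]`: `x i = X (Sum.inl i)`,
`y i = X (Sum.inr i)`.  Indices are 0-based: the variable `x_i` of the paper
(`1 ≤ i ≤ n`) corresponds to `Sum.inl ⟨i-1⟩`. -/
abbrev A := MvPolynomial (Fin n ⊕ Fin n) F

noncomputable def xv (i : Fin n) : A F n := X (Sum.inl i)
noncomputable def yv (i : Fin n) : A F n := X (Sum.inr i)

/-- Multiplication operator by a polynomial. -/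
noncomputable def mul (f : A F n) : Module.End F (A F n) := LinearMap.mulLeft F f

/-- `∂_{x_i}`. -/
noncomputable def pdx (i : Fin n) : Module.End F (A F n) :=
  (pderiv (Sum.inl i : Fin n ⊕ Fin n)).toLinearMap

/-- `∂_{y_i}`. -/
noncomputable def pdy (i : Fin n) : Module.End F (A F n) :=
  (pderiv (Sum.inr i : Fin n ⊕ Fin n)).toLinearMap

/-- `E^x_{i,j}` (1-based condition `i ≤ n₁` becomes `(i:ℕ) < n₁`). -/
noncomputable def Ex (i j : Fin n) : Module.End F (A F n) :=
  if (i : ℕ) < n₁ then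
    (if (j : ℕ) < n₁ then
      -(mul F n (xv F n j) * pdx F n i) - (if i = j then 1 else 0)
    else pdx F n i * pdx F n j)
  else
    (if (j : ℕ) < n₁ then -(mul F n (xv F n i * xv F n j))
    else mul F n (xv F n i) * pdx F n j)

/-- `E^y_{i,j}` (1-based condition `i ≤ n₂` becomes `(i:ℕ) < n₂`). -/
noncomputable def Ey (i j : Fin n) : Module.End F (A F n) :=
  if (i : ℕ) < n₂ then
    (if (j : ℕ) < n₂ then mul F n (yv F n i) * pdy F n j
    else -(mul F n (yv F n i * yv F n j)))
  else
    (if (j : ℕ) < n₂ then pdy F n i * pdy F n j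
    else -(mul F n (yv F n j) * pdy F n i) - (if i = j then 1 else 0))

/-- The twisted oscillator representation `π(E_{i,j}) = E^x_{i,j} − E^y_{j,i}`. -/
noncomputable def π (i j : Fin n) : Module.End F (A F n) :=
  Ex F n n₁ i j - Ey F n n₂ j i

end Stmt2

/-!
The Fourier transform `x ↦ ∂/∂x`, `∂/∂x ↦ -x` is an automorphism of the Weyl algebra, so the
images `a i`, `b j` of `x_i`, `∂/∂x_j` still satisfy `[b j, a k] = δ_{jk}` and commute among
themselves. For any such family `E_{i,j} ↦ a i * b j` respects the brackets of matrix units, as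
does its contragredient `E_{i,j} ↦ -a' j * b' i`. The twisted representation `π` is the sum of
the first construction in the `x`-variables and the second in the `y`-variables; the two summands
act on disjoint sets of variables, hence commute, and the brackets add up.
-/

/-- `a i` and `b j` satisfy the relations of `x_i` and `∂/∂x_j` in the Weyl algebra. -/
structure IsWeylPair {S ι : Type*} [Ring S] [DecidableEq ι] (a b : ι → S) : Prop where
  commute_left : ∀ i k, Commute (a i) (a k)
  commute_right : ∀ j l, Commute (b j) (b l)
  mul_eq_mul_add : ∀ j k, b j * a k = a k * b j + if j = k then 1 else 0

namespace IsWeylPair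

variable {S ι : Type*} [Ring S] [DecidableEq ι] {a b : ι → S}

theorem commutator_mul_mul (h : IsWeylPair a b) (i j k l : ι) :
    a i * b j * (a k * b l) - a k * b l * (a i * b j)
      = (if j = k then a i * b l else 0) - (if l = i then a k * b j else 0) := by
  have reorder : ∀ i j k l, a i * b j * (a k * b l)
      = a i * a k * (b j * b l) + if j = k then a i * b l else 0 := fun i j k l ↦ by
    rw [mul_assoc, ← mul_assoc (b j), h.mul_eq_mul_add]
    split_ifs <;> simp only [add_zero, one_mul, mul_add, add_mul, mul_assoc]
  rw [reorder i j k l, reorder k l i j, (h.commute_left i k).eq, (h.commute_right j l).eq]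
  abel

theorem commutator_sub_mul_mul {a' b' : ι → S} (h : IsWeylPair a b) (h' : IsWeylPair a' b')
    (hcomm : ∀ i j k l, Commute (a i * b j) (a' k * b' l)) (i j k l : ι) :
    (a i * b j - a' j * b' i) * (a k * b l - a' l * b' k)
        - (a k * b l - a' l * b' k) * (a i * b j - a' j * b' i)
      = (if j = k then a i * b l - a' l * b' i else 0)
        - (if l = i then a k * b j - a' j * b' k else 0) := by
  calc _ = (a i * b j * (a k * b l) - a k * b l * (a i * b j))
          + (a' j * b' i * (a' l * b' k) - a' l * b' k * (a' j * b' i)) := by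
        simp only [sub_mul, mul_sub, (hcomm i j l k).eq, (hcomm k l j i).eq]
        abel
    _ = _ := by
        rw [h.commutator_mul_mul, h'.commutator_mul_mul]
        by_cases hjk : j = k <;> by_cases hli : l = i <;>
          simp only [hjk, hli, eq_comm (a := k), eq_comm (a := i), if_true, if_false] <;> abel

end IsWeylPair

namespace MvPolynomial

section Semiring

variable {R σ : Type*} [CommSemiring R]

theorem pderiv_pderiv_comm (v w : σ) (f : MvPolynomial σ R) :
    pderiv v (pderiv w f) = pderiv w (pderiv v f) := by
  classical
  induction f using MvPolynomial.induction_on with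
  | C r => simp
  | add p q hp hq => simp [hp, hq]
  | mul_X p u hp =>
    simp only [pderiv_mul, map_add, pderiv_X, Pi.single_apply, hp,
      apply_ite (pderiv v), apply_ite (pderiv w), pderiv_one, map_zero, ite_self]
    ring

variable (R) in
noncomputable def mulXEnd (w : σ) : Module.End R (MvPolynomial σ R) := LinearMap.mulLeft R (X w)

variable (R) in
noncomputable def pderivEnd (w : σ) : Module.End R (MvPolynomial σ R) := (pderiv w).toLinearMap

theorem mulLeft_X_mul_X (v w : σ) :
    LinearMap.mulLeft R (X v * X w : MvPolynomial σ R) = mulXEnd R v * mulXEnd R w :=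
  LinearMap.mulLeft_mul _ _ _ _

theorem commute_mulXEnd (v w : σ) : Commute (mulXEnd R v) (mulXEnd R w) :=
  (Commute.all (X v : MvPolynomial σ R) (X w)).map (Algebra.lmul R _)

theorem commute_pderivEnd (v w : σ) : Commute (pderivEnd R v) (pderivEnd R w) :=
  LinearMap.ext (pderiv_pderiv_comm v w)

theorem pderivEnd_mul_mulXEnd [DecidableEq σ] (v w : σ) :
    pderivEnd R v * mulXEnd R w = mulXEnd R w * pderivEnd R v + if v = w then 1 else 0 := by
  refine LinearMap.ext fun f ↦ ?_
  simp only [pderivEnd, mulXEnd, Module.End.mul_apply, LinearMap.add_apply,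
    LinearMap.mulLeft_apply]
  by_cases h : v = w
  · subst h
    simp [add_comm]
  · simp [h, pderiv_X_of_ne (Ne.symm h)]

theorem commute_pderivEnd_mulXEnd {v w : σ} (h : v ≠ w) :
    Commute (pderivEnd R v) (mulXEnd R w) := by
  classical
  simpa [Commute, SemiconjBy, h] using pderivEnd_mul_mulXEnd (R := R) v w

end Semiring

variable {R σ : Type*} [CommRing R]

variable (R) in
/-- The image of the multiplication by `X w` under the Fourier transform `x ↦ ∂/∂x, ∂/∂x ↦ -x`
in the variable `w`, if `p` holds, and under the identity otherwise. -/
noncomputable def fourierX (p : Prop) [Decidable p] (w : σ) : Module.End R (MvPolynomial σ R) :=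
  if p then pderivEnd R w else mulXEnd R w

variable (R) in
/-- The image of `∂/∂(X w)` under the same transformation as in `fourierX`. -/
noncomputable def fourierD (p : Prop) [Decidable p] (w : σ) : Module.End R (MvPolynomial σ R) :=
  if p then -mulXEnd R w else pderivEnd R w

section Fourier

variable {p q : Prop} [Decidable p] [Decidable q] {v w : σ}

theorem commute_fourierX (h : v ≠ w) : Commute (fourierX R p v) (fourierX R q w) := by
  unfold fourierX
  split_ifs
  exacts [commute_pderivEnd v w, commute_pderivEnd_mulXEnd (R := R) h,
    (commute_pderivEnd_mulXEnd (R := R) h.symm).symm, commute_mulXEnd (R := R) v w]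

theorem commute_fourierD (h : v ≠ w) : Commute (fourierD R p v) (fourierD R q w) := by
  unfold fourierD
  split_ifs
  exacts [(commute_mulXEnd (R := R) v w).neg_left.neg_right,
    (commute_pderivEnd_mulXEnd (R := R) h.symm).symm.neg_left,
    (commute_pderivEnd_mulXEnd (R := R) h).neg_right, commute_pderivEnd v w]

theorem commute_fourierD_fourierX (h : v ≠ w) : Commute (fourierD R p v) (fourierX R q w) := by
  unfold fourierD fourierX
  split_ifs
  exacts [(commute_pderivEnd_mulXEnd (R := R) h.symm).symm.neg_left,
    (commute_mulXEnd (R := R) v w).neg_left,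
    commute_pderivEnd v w, commute_pderivEnd_mulXEnd (R := R) h]

theorem fourierD_mul_fourierX_self :
    fourierD R p w * fourierX R p w = fourierX R p w * fourierD R p w + 1 := by
  classical
  have hw := pderivEnd_mul_mulXEnd (R := R) w w
  rw [if_pos rfl] at hw
  unfold fourierD fourierX
  split_ifs
  · rw [neg_mul (mulXEnd R w), mul_neg (pderivEnd R w), hw]
    abel
  · exact hw

end Fourier

theorem isWeylPair_fourier {ι : Type*} [DecidableEq ι] (c : ι → Prop) [DecidablePred c]
    {v : ι → σ} (hv : Function.Injective v) :
    IsWeylPair (fun i ↦ fourierX R (c i) (v i)) (fun j ↦ fourierD R (c j) (v j)) where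
  commute_left i k := by
    obtain rfl | h := eq_or_ne i k
    exacts [Commute.refl _, commute_fourierX (hv.ne h)]
  commute_right j l := by
    obtain rfl | h := eq_or_ne j l
    exacts [Commute.refl _, commute_fourierD (hv.ne h)]
  mul_eq_mul_add j k := by
    obtain rfl | h := eq_or_ne j k
    · rw [if_pos rfl, fourierD_mul_fourierX_self]
    · rw [if_neg h, add_zero, (commute_fourierD_fourierX (hv.ne h)).eq]

theorem commute_fourier_of_disjoint {p q p' q' : Prop} [Decidable p] [Decidable q]
    [Decidable p'] [Decidable q'] {u v u' v' : σ}
    (huu' : u ≠ u') (huv' : u ≠ v') (hvu' : v ≠ u') (hvv' : v ≠ v') :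
    Commute (fourierX R p u * fourierD R q v) (fourierX R p' u' * fourierD R q' v') :=
  ((commute_fourierX huu').mul_right (commute_fourierD_fourierX huv'.symm).symm).mul_left
    ((commute_fourierD_fourierX hvu').mul_right (commute_fourierD hvv'))

end MvPolynomial

namespace Stmt2

section

variable {F : Type*} [Field F] {n n₁ n₂ : ℕ}

theorem Ex_eq_fourierX_mul_fourierD (i j : Fin n) :
    Ex F n n₁ i j
      = fourierX F ((i : ℕ) < n₁) (Sum.inl i) * fourierD F ((j : ℕ) < n₁) (Sum.inl j) := by
  unfold Ex fourierX fourierD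
  by_cases hi : (i : ℕ) < n₁ <;> by_cases hj : (j : ℕ) < n₁ <;>
    simp only [hi, hj, if_true, if_false]
  · rw [mul_neg (pderivEnd F _), pderivEnd_mul_mulXEnd, neg_add']
    simp only [Sum.inl.injEq]
    rfl
  · rfl
  · rw [mul_neg (mulXEnd F _), ← mulLeft_X_mul_X]
    rfl
  · rfl

theorem Ey_eq_fourierX_mul_fourierD (i j : Fin n) :
    Ey F n n₂ i j
      = fourierX F (¬ (i : ℕ) < n₂) (Sum.inr i) * fourierD F (¬ (j : ℕ) < n₂) (Sum.inr j) := by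
  unfold Ey fourierX fourierD
  by_cases hi : (i : ℕ) < n₂ <;> by_cases hj : (j : ℕ) < n₂ <;>
    simp only [hi, hj, not_true, not_false_eq_true, if_true, if_false]
  · rfl
  · rw [mul_neg (mulXEnd F _), ← mulLeft_X_mul_X]
    rfl
  · rfl
  · rw [mul_neg (pderivEnd F _), pderivEnd_mul_mulXEnd, neg_add']
    simp only [Sum.inr.injEq]
    rfl

theorem π_eq_fourier (i j : Fin n) :
    π F n n₁ n₂ i j
      = fourierX F ((i : ℕ) < n₁) (Sum.inl i) * fourierD F ((j : ℕ) < n₁) (Sum.inl j)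
        - fourierX F (¬ (j : ℕ) < n₂) (Sum.inr j) * fourierD F (¬ (i : ℕ) < n₂) (Sum.inr i) := by
  rw [π, Ex_eq_fourierX_mul_fourierD, Ey_eq_fourierX_mul_fourierD]

end

variable (F : Type*) [Field F] [CharZero F] (n n₁ n₂ : ℕ)

theorem pi_lie_hom (i j k l : Fin n) :
    ((if j = k then π F n n₁ n₂ i l else 0) - (if l = i then π F n n₁ n₂ k j else 0)) =
      π F n n₁ n₂ i j * π F n n₁ n₂ k l - π F n n₁ n₂ k l * π F n n₁ n₂ i j := by
  have hx := isWeylPair_fourier (R := F) (σ := Fin n ⊕ Fin n) (fun a : Fin n ↦ (a : ℕ) < n₁)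
    Sum.inl_injective
  have hy := isWeylPair_fourier (R := F) (σ := Fin n ⊕ Fin n) (fun a : Fin n ↦ ¬ (a : ℕ) < n₂)
    Sum.inr_injective
  have hxy := hx.commutator_sub_mul_mul hy (fun _ _ _ _ ↦ commute_fourier_of_disjoint
    Sum.inl_ne_inr Sum.inl_ne_inr Sum.inl_ne_inr Sum.inl_ne_inr) i j k l
  simp only [π_eq_fourier]
  exact hxy.symm

end Stmt2
end

section
/- Let A = F[x₁,...,xₙ,y₁,...,yₙ] with char F = 0 and fix 1 ≤ n₁ < n₂ ≤ n. Define the twisted Laplace operator Δ̃ = Σ_{i=1}^{n₁} x_i∂_{y_i} − Σ_{r=n₁+1}^{n₂} ∂_{x_r}∂_{y_r} + Σ_{s=n₂+1}^{n} y_s∂_{x_s}. For i₁ ∈ {1,...,n₁} and i₃ ∈ {n₂+1,...,n}, the multiplication operator by x_{i₁}x_{i₃} − y_{i₁}y_{i₃} commutes with Δ̃ on A. -/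
open MvPolynomial

namespace Stmt3

variable (F : Type*) [Field F] [CharZero F] (n n₁ n₂ : ℕ)

abbrev A := MvPolynomial (Fin n ⊕ Fin n) F

noncomputable def xv (i : Fin n) : A F n := X (Sum.inl i)
noncomputable def yv (i : Fin n) : A F n := X (Sum.inr i)
noncomputable def mul (f : A F n) : Module.End F (A F n) := LinearMap.mulLeft F f
noncomputable def pdx (i : Fin n) : Module.End F (A F n) :=
  (pderiv (Sum.inl i : Fin n ⊕ Fin n)).toLinearMap
noncomputable def pdy (i : Fin n) : Module.End F (A F n) :=
  (pderiv (Sum.inr i : Fin n ⊕ Fin n)).toLinearMap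

/-- The twisted Laplace operator
`Δ̃ = Σ_{i=1}^{n₁} x_i∂_{y_i} − Σ_{r=n₁+1}^{n₂} ∂_{x_r}∂_{y_r} + Σ_{s=n₂+1}^{n} y_s∂_{x_s}`
(indices 0-based). -/
noncomputable def lap : Module.End F (A F n) :=
  (∑ i ∈ Finset.univ.filter (fun i : Fin n => (i : ℕ) < n₁),
      mul F n (xv F n i) * pdy F n i)
  - (∑ r ∈ Finset.univ.filter (fun r : Fin n => n₁ ≤ (r : ℕ) ∧ (r : ℕ) < n₂),
      pdx F n r * pdy F n r)
  + ∑ s ∈ Finset.univ.filter (fun s : Fin n => n₂ ≤ (s : ℕ)),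
      mul F n (yv F n s) * pdx F n s

set_option linter.unusedSectionVars false

lemma mul_mul_eq (a b : A F n) : mul F n a * mul F n b = mul F n (a * b) := by
  ext g; simp [mul, Module.End.mul_apply, mul_assoc]

lemma mul_zero' : mul F n (0 : A F n) = 0 := by ext g; simp [mul]

lemma d_comm (v : Fin n ⊕ Fin n) (f : A F n) :
    ((pderiv v).toLinearMap : Module.End F (A F n)) * mul F n f
      = mul F n f * (pderiv v).toLinearMap + mul F n (pderiv v f) := by
  ext g; simp [mul, Module.End.mul_apply, pderiv_mul]; ring

lemma term_comm (a f : A F n) (v : Fin n ⊕ Fin n) :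
    mul F n a * (pderiv v).toLinearMap * mul F n f
      = mul F n f * (mul F n a * (pderiv v).toLinearMap) + mul F n (a * pderiv v f) := by
  rw [mul_assoc, d_comm F n v f, mul_add, mul_mul_eq]
  congr 1
  rw [← mul_assoc, mul_mul_eq, mul_comm a f, ← mul_mul_eq, mul_assoc]


/-- for `i₁ ∈ {1,...,n₁}` and `i₃ ∈ {n₂+1,...,n}`, multiplication by
`x_{i₁} x_{i₃} − y_{i₁} y_{i₃}` commutes with `Δ̃`. -/
theorem lap_commutes_with_alternating_mul
    (h₁ : 1 ≤ n₁) (h₁₂ : n₁ < n₂) (h₂ : n₂ ≤ n)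
    (i₁ i₃ : Fin n) (hi₁ : (i₁ : ℕ) < n₁) (hi₃ : n₂ ≤ (i₃ : ℕ)) :
    lap F n n₁ n₂ * mul F n (xv F n i₁ * xv F n i₃ - yv F n i₁ * yv F n i₃) =
      mul F n (xv F n i₁ * xv F n i₃ - yv F n i₁ * yv F n i₃) * lap F n n₁ n₂ := by
  classical
  set f : A F n := xv F n i₁ * xv F n i₃ - yv F n i₁ * yv F n i₃ with hf
  have hne : i₁ ≠ i₃ := by
    intro h; rw [h] at hi₁; omega
  have hdy₁ : pderiv (Sum.inr i₁ : Fin n ⊕ Fin n) f = -(yv F n i₃) := by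
    simp [hf, xv, yv, pderiv_X_of_ne, pderiv_X_self, hne, Ne.symm hne]
  have hdx₃ : pderiv (Sum.inl i₃ : Fin n ⊕ Fin n) f = xv F n i₁ := by
    simp [hf, xv, yv, pderiv_X_of_ne, pderiv_X_self, hne, Ne.symm hne]
  have hdy0 : ∀ i : Fin n, i ≠ i₁ → i ≠ i₃ → pderiv (Sum.inr i : Fin n ⊕ Fin n) f = 0 := by
    intro i h1 h3
    simp [hf, xv, yv, pderiv_X_of_ne, h1, h3, Ne.symm h1, Ne.symm h3]
  have hdx0 : ∀ r : Fin n, r ≠ i₁ → r ≠ i₃ → pderiv (Sum.inl r : Fin n ⊕ Fin n) f = 0 := by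
    intro r h1 h3
    simp [hf, xv, yv, pderiv_X_of_ne, h1, h3, Ne.symm h1, Ne.symm h3]
  set s₁ := Finset.univ.filter (fun i : Fin n => (i : ℕ) < n₁) with hs₁
  set s₂ := Finset.univ.filter (fun r : Fin n => n₁ ≤ (r : ℕ) ∧ (r : ℕ) < n₂) with hs₂
  set s₃ := Finset.univ.filter (fun s : Fin n => n₂ ≤ (s : ℕ)) with hs₃
  set M := mul F n f with hM
  -- Sum 1
  have S1 : (∑ i ∈ s₁, mul F n (xv F n i) * pdy F n i) * M
      = M * (∑ i ∈ s₁, mul F n (xv F n i) * pdy F n i)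
        + mul F n (xv F n i₁ * -(yv F n i₃)) := by
    simp only [pdy]
    rw [Finset.sum_mul]
    rw [Finset.sum_congr rfl (fun i _ => term_comm F n (xv F n i) f (Sum.inr i))]
    rw [Finset.sum_add_distrib, ← Finset.mul_sum]
    congr 1
    rw [Finset.sum_eq_single_of_mem i₁ (by simp [hs₁, hi₁])]
    · rw [hdy₁]
    · intro i hi hne'
      have hi3 : i ≠ i₃ := by
        intro h; rw [hs₁] at hi; simp at hi; rw [h] at hi; omega
      rw [hdy0 i hne' hi3, MulZeroClass.mul_zero, mul_zero']
  -- Sum 3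
  have S3 : (∑ s ∈ s₃, mul F n (yv F n s) * pdx F n s) * M
      = M * (∑ s ∈ s₃, mul F n (yv F n s) * pdx F n s)
        + mul F n (yv F n i₃ * xv F n i₁) := by
    simp only [pdx]
    rw [Finset.sum_mul]
    rw [Finset.sum_congr rfl (fun s _ => term_comm F n (yv F n s) f (Sum.inl s))]
    rw [Finset.sum_add_distrib, ← Finset.mul_sum]
    congr 1
    rw [Finset.sum_eq_single_of_mem i₃ (by simp [hs₃, hi₃])]
    · rw [hdx₃]
    · intro s hs hne'
      have hs1 : s ≠ i₁ := by
        intro h; rw [hs₃] at hs; simp at hs; rw [h] at hs; omega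
      rw [hdx0 s hs1 hne', MulZeroClass.mul_zero, mul_zero']
  -- Sum 2
  have S2 : (∑ r ∈ s₂, pdx F n r * pdy F n r) * M
      = M * (∑ r ∈ s₂, pdx F n r * pdy F n r) := by
    rw [Finset.sum_mul, Finset.mul_sum]
    refine Finset.sum_congr rfl (fun r hr => ?_)
    have hr' : n₁ ≤ (r : ℕ) ∧ (r : ℕ) < n₂ := by
      rw [hs₂] at hr; simpa using hr
    have hr1 : r ≠ i₁ := by intro h; rw [h] at hr'; omega
    have hr3 : r ≠ i₃ := by intro h; rw [h] at hr'; omega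
    simp only [pdx, pdy]
    rw [mul_assoc, d_comm F n (Sum.inr r) f,
      hdy0 r hr1 hr3, mul_zero', add_zero, ← mul_assoc,
      d_comm F n (Sum.inl r) f,
      hdx0 r hr1 hr3, mul_zero', add_zero, mul_assoc]
  have hcancel : mul F n (xv F n i₁ * -(yv F n i₃)) + mul F n (yv F n i₃ * xv F n i₁) = 0 := by
    rw [← mul_mul_eq, ← mul_mul_eq]
    ext g
    simp [mul, Module.End.mul_apply]
    ring
  have habel : ∀ (a b c e1 e3 : Module.End F (A F n)), e1 + e3 = 0 →
      (a + e1) - b + (c + e3) = a - b + c := by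
    intro a b c e1 e3 h
    have he : e1 = -e3 := eq_neg_of_add_eq_zero_left h
    subst he
    abel
  rw [lap, add_mul, sub_mul, ← hs₁, ← hs₂, ← hs₃, S1, S2, S3, mul_add, mul_sub, habel _ _ _ _ _ hcancel]

end Stmt3
end

section
/- With the notation of the twisted representation and the operator T as above (char F = 0, 1 ≤ n₁ < n₂ ≤ n), T commutes with π(E_{i,j}) for all i, j ∈ {1,...,n} with i, j ≠ n₁+1: T ∘ π(E_{i,j}) = π(E_{i,j}) ∘ T as operators on A. -/
/-!
After the twist, the operators `xRaise i, xLower i, yRaise i, yLower i` (each one of `±x_i`,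
`∂_{x_i}`, `±y_i`, `∂_{y_i}`) satisfy the canonical commutation relations of `x_i, ∂_{x_i}, y_i,
∂_{y_i}`, and in terms of them `π(E_{i,j}) = xRaise i * xLower j - yRaise j * yLower i` and
`Δ̃ = -∑ xLower t * yLower t`. The untwisted computation therefore shows that `π(E_{i,j})` commutes
with `Δ̃`. For `i, j ≠ n₁+1` it also commutes with `x_{n₁+1}`, `y_{n₁+1}` and their derivatives,
hence with the Euler operators `x_{n₁+1} ∂_{x_{n₁+1}}` and `y_{n₁+1} ∂_{y_{n₁+1}}`: it preserves
the exponents `α_{n₁+1}, β_{n₁+1}` that enter the coefficients of `T`. On polynomials with these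
exponents fixed, `T` is one polynomial in `x_{n₁+1} y_{n₁+1}` and `Δ̃ + ∂_{x_{n₁+1}} ∂_{y_{n₁+1}}`,
both of which commute with `π(E_{i,j})`. The series may be cut off at any bound on the degree,
since every term of `Δ̃ + ∂_{x_{n₁+1}} ∂_{y_{n₁+1}}` lowers the weight `twistWeight` by one.
-/

open MvPolynomial

namespace Stmt6

variable (F : Type*) [Field F] [CharZero F] (n n₁ n₂ : ℕ)

abbrev A := MvPolynomial (Fin n ⊕ Fin n) F

noncomputable def xv (i : Fin n) : A F n := X (Sum.inl i)
noncomputable def yv (i : Fin n) : A F n := X (Sum.inr i)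
noncomputable def mul (f : A F n) : Module.End F (A F n) := LinearMap.mulLeft F f
noncomputable def pdx (i : Fin n) : Module.End F (A F n) :=
  (pderiv (Sum.inl i : Fin n ⊕ Fin n)).toLinearMap
noncomputable def pdy (i : Fin n) : Module.End F (A F n) :=
  (pderiv (Sum.inr i : Fin n ⊕ Fin n)).toLinearMap

/-- `E^x_{i,j}`. -/
noncomputable def Ex (i j : Fin n) : Module.End F (A F n) :=
  if (i : ℕ) < n₁ then
    (if (j : ℕ) < n₁ then
      -(mul F n (xv F n j) * pdx F n i) - (if i = j then 1 else 0)
    else pdx F n i * pdx F n j)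
  else
    (if (j : ℕ) < n₁ then -(mul F n (xv F n i * xv F n j))
    else mul F n (xv F n i) * pdx F n j)

/-- `E^y_{i,j}`. -/
noncomputable def Ey (i j : Fin n) : Module.End F (A F n) :=
  if (i : ℕ) < n₂ then
    (if (j : ℕ) < n₂ then mul F n (yv F n i) * pdy F n j
    else -(mul F n (yv F n i * yv F n j)))
  else
    (if (j : ℕ) < n₂ then pdy F n i * pdy F n j
    else -(mul F n (yv F n j) * pdy F n i) - (if i = j then 1 else 0))

/-- The twisted oscillator representation `π(E_{i,j}) = E^x_{i,j} − E^y_{j,i}`. -/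
noncomputable def π (i j : Fin n) : Module.End F (A F n) :=
  Ex F n n₁ i j - Ey F n n₂ j i

/-- The twisted Laplace operator. -/
noncomputable def lap : Module.End F (A F n) :=
  (∑ i ∈ Finset.univ.filter (fun i : Fin n => (i : ℕ) < n₁),
      mul F n (xv F n i) * pdy F n i)
  - (∑ r ∈ Finset.univ.filter (fun r : Fin n => n₁ ≤ (r : ℕ) ∧ (r : ℕ) < n₂),
      pdx F n r * pdy F n r)
  + ∑ s ∈ Finset.univ.filter (fun s : Fin n => n₂ ≤ (s : ℕ)),
      mul F n (yv F n s) * pdx F n s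

/-- The operator `T` on a monomial with exponent vector `d` (the `x`-exponents are
`d (Sum.inl ·)` and the `y`-exponents are `d (Sum.inr ·)`); the defining series is
finite, all terms beyond the total degree being zero. -/
noncomputable def Tmono (hn : n₁ < n) (d : (Fin n ⊕ Fin n) →₀ ℕ) : A F n :=
  ∑ i ∈ Finset.range (d.sum (fun _ e => e) + 1),
    ((∏ r ∈ Finset.range i,
        ((d (Sum.inl ⟨n₁, hn⟩) + r + 1) * (d (Sum.inr ⟨n₁, hn⟩) + r + 1)) : ℕ) : F)⁻¹ •
      ((xv F n ⟨n₁, hn⟩ * yv F n ⟨n₁, hn⟩) ^ i *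
        (((lap F n n₁ n₂ + pdx F n ⟨n₁, hn⟩ * pdy F n ⟨n₁, hn⟩) ^ i)
          (monomial d (1 : F))))

/-- The linear extension of `T` to all polynomials. -/
noncomputable def Tfun (hn : n₁ < n) (p : A F n) : A F n :=
  ∑ d ∈ p.support, (coeff d p) • Tmono F n n₁ n₂ hn d

section Weyl

variable (R : Type*) {σ : Type*} [CommRing R]

noncomputable abbrev mulX (u : σ) : Module.End R (MvPolynomial σ R) := LinearMap.mulLeft R (X u)

noncomputable abbrev dX (u : σ) : Module.End R (MvPolynomial σ R) := (pderiv u).toLinearMap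

variable {R}

theorem commute_mulX (u v : σ) : Commute (mulX R u) (mulX R v) :=
  LinearMap.ext fun q => by simp [Module.End.mul_apply, mul_left_comm]

theorem commute_dX (u v : σ) : Commute (dX R u) (dX R v) := by
  have h : ⁅(pderiv u : Derivation R (MvPolynomial σ R) _), pderiv v⁆ = 0 :=
    derivation_ext fun w => by
      have hX : ∀ a b : σ, pderiv a (pderiv b (X w : MvPolynomial σ R)) = 0 := fun a b => by
        rcases eq_or_ne w b with rfl | hb
        · rw [pderiv_X_self, pderiv_one]
        · rw [pderiv_X_of_ne hb, map_zero]
      rw [Derivation.commutator_apply, Derivation.zero_apply, hX, hX, sub_zero]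
  have := congrArg Derivation.toLinearMap h
  rw [Derivation.commutator_coe_linear_map, Ring.lie_def] at this
  exact sub_eq_zero.mp (by simpa using this)

theorem dX_mul_mulX [DecidableEq σ] (u v : σ) :
    dX R u * mulX R v = mulX R v * dX R u + if u = v then 1 else 0 := by
  ext q
  by_cases h : u = v
  · subst h; simp [Module.End.mul_apply, add_comm]
  · simp [Module.End.mul_apply, h, pderiv_X_of_ne (Ne.symm h)]

theorem commute_mulX_dX {u v : σ} (h : u ≠ v) : Commute (mulX R u) (dX R v) := by
  classical
  have := dX_mul_mulX (R := R) v u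
  rw [if_neg h.symm, add_zero] at this
  exact this.symm

def IsVarOp (u : σ) (Z : Module.End R (MvPolynomial σ R)) : Prop :=
  Z = mulX R u ∨ Z = -mulX R u ∨ Z = dX R u

theorem IsVarOp.commute {u v : σ} {Z W : Module.End R (MvPolynomial σ R)}
    (hZ : IsVarOp u Z) (hW : IsVarOp v W) (huv : u ≠ v) : Commute Z W := by
  have hXD := commute_mulX_dX (R := R) huv
  have hDX := (commute_mulX_dX (R := R) huv.symm).symm
  have hXX := commute_mulX (R := R) u v
  rcases hZ with rfl | rfl | rfl <;> rcases hW with rfl | rfl | rfl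
  exacts [hXX, hXX.neg_right, hXD, hXX.neg_left, hXX.neg_left.neg_right, hXD.neg_left,
    hDX, hDX.neg_right, commute_dX u v]

end Weyl

-- With `a, b, c, e` in the roles of `x, ∂_x, y, ∂_y`: the Laplacian `∑ ∂_{x_t} ∂_{y_t}` commutes
-- with `x_i ∂_{x_j} - y_j ∂_{y_i}`.
theorem commute_sum_mul_of_ccr {S ι : Type*} [Ring S] [Fintype ι] [DecidableEq ι]
    {a b c e : ι → S}
    (hba : ∀ s t, b s * a t = a t * b s + if s = t then 1 else 0)
    (hec : ∀ s t, e s * c t = c t * e s + if s = t then 1 else 0)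
    (hbb : ∀ s t, Commute (b s) (b t)) (hee : ∀ s t, Commute (e s) (e t))
    (hbe : ∀ s t, Commute (b s) (e t)) (hae : ∀ s t, Commute (a s) (e t))
    (hbc : ∀ s t, Commute (b s) (c t)) (i j : ι) :
    Commute (∑ t, b t * e t) (a i * b j - c j * e i) := by
  have hab : ∀ t, b t * e t * (a i * b j) =
      a i * b j * (b t * e t) + if t = i then b j * e t else 0 := fun t =>
    calc b t * e t * (a i * b j) = (b t * a i) * (b j * e t) := by
          rw [(hbe j t).eq, mul_assoc, ← mul_assoc (e t), ← (hae i t).eq]; simp only [mul_assoc]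
      _ = a i * (b t * b j) * e t + if t = i then b j * e t else 0 := by
          rw [hba]; split_ifs <;> simp [mul_assoc, add_mul]
      _ = _ := by rw [(hbb t j).eq]; simp only [mul_assoc]
  have hce : ∀ t, b t * e t * (c j * e i) =
      c j * e i * (b t * e t) + if t = j then b t * e i else 0 := fun t =>
    calc b t * e t * (c j * e i) = b t * (e t * c j) * e i := by simp only [mul_assoc]
      _ = c j * b t * (e t * e i) + if t = j then b t * e i else 0 := by
          rw [hec]; split_ifs <;> simp [mul_assoc, add_mul, mul_add, ← (hbc t j).eq]
      _ = _ := by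
          rw [(hee t i).eq, mul_assoc (c j), ← mul_assoc (b t), (hbe t i).eq]
          simp only [mul_assoc]
  have hA := Finset.sum_congr rfl fun t (_ : t ∈ Finset.univ) => hab t
  have hC := Finset.sum_congr rfl fun t (_ : t ∈ Finset.univ) => hce t
  rw [Finset.sum_add_distrib, Finset.sum_ite_eq', ← Finset.mul_sum, ← Finset.sum_mul] at hA hC
  simp only [Finset.mem_univ, if_true] at hA hC
  rw [Commute, SemiconjBy, mul_sub, sub_mul, hA, hC, add_sub_add_right_eq_sub]

section WeightFiltration

variable (R : Type*) {σ : Type*} [CommRing R] (w : σ → ℕ)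

noncomputable def weightLE (m : ℤ) : Submodule R (MvPolynomial σ R) :=
  restrictSupport R {d | (Finsupp.weight w d : ℤ) ≤ m}

variable {R w}

theorem mem_weightLE_iff {m : ℤ} {q : MvPolynomial σ R} :
    q ∈ weightLE R w m ↔ ∀ d ∈ q.support, (Finsupp.weight w d : ℤ) ≤ m :=
  Iff.rfl

theorem monomial_mem_weightLE (d : σ →₀ ℕ) (r : R) :
    monomial d r ∈ weightLE R w (Finsupp.weight w d) :=
  mem_weightLE_iff.mpr fun _ hd => by rw [Finset.mem_singleton.mp (support_monomial_subset hd)]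

theorem weightLE_mono {m m' : ℤ} (h : m ≤ m') : weightLE R w m ≤ weightLE R w m' :=
  restrictSupport_mono R fun _ hd => le_trans hd h

theorem weightLE_eq_bot {m : ℤ} (h : m < 0) : weightLE R w m = ⊥ := by
  refine eq_bot_iff.mpr fun q hq => ?_
  rw [Submodule.mem_bot, ← support_eq_empty, Finset.eq_empty_iff_forall_notMem]
  exact fun d hd => absurd (mem_weightLE_iff.mp hq d hd) (by omega)

variable (w) in
def ShiftsWeight (Z : Module.End R (MvPolynomial σ R)) (δ : ℤ) : Prop :=
  ∀ m q, q ∈ weightLE R w m → Z q ∈ weightLE R w (m + δ)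

namespace ShiftsWeight

variable {Z Z' : Module.End R (MvPolynomial σ R)} {δ δ' : ℤ}

theorem mono (hZ : ShiftsWeight w Z δ) (h : δ ≤ δ') : ShiftsWeight w Z δ' :=
  fun m q hq => weightLE_mono (by omega) (hZ m q hq)

theorem add (hZ : ShiftsWeight w Z δ) (hZ' : ShiftsWeight w Z' δ) : ShiftsWeight w (Z + Z') δ :=
  fun m q hq => add_mem (hZ m q hq) (hZ' m q hq)

theorem neg (hZ : ShiftsWeight w Z δ) : ShiftsWeight w (-Z) δ :=
  fun m q hq => neg_mem (hZ m q hq)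

theorem sub (hZ : ShiftsWeight w Z δ) (hZ' : ShiftsWeight w Z' δ) : ShiftsWeight w (Z - Z') δ :=
  sub_eq_add_neg Z Z' ▸ hZ.add hZ'.neg

theorem sum {ι : Type*} {s : Finset ι} {Z : ι → Module.End R (MvPolynomial σ R)}
    (hZ : ∀ t ∈ s, ShiftsWeight w (Z t) δ) : ShiftsWeight w (∑ t ∈ s, Z t) δ :=
  fun m q hq => by
    rw [LinearMap.sum_apply]
    exact Submodule.sum_mem _ fun t ht => hZ t ht m q hq

theorem mul (hZ : ShiftsWeight w Z δ) (hZ' : ShiftsWeight w Z' δ') :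
    ShiftsWeight w (Z * Z') (δ' + δ) :=
  fun m q hq => by
    rw [Module.End.mul_apply, ← add_assoc]
    exact hZ _ _ (hZ' m q hq)

theorem pow (hZ : ShiftsWeight w Z δ) (i : ℕ) : ShiftsWeight w (Z ^ i) (i * δ) := by
  induction i with
  | zero => intro m q hq; simpa using hq
  | succ i ih => simpa [pow_succ, add_mul, add_comm] using ih.mul hZ

theorem pow_apply_eq_zero (hZ : ShiftsWeight w Z (-1)) {m : ℤ} {q : MvPolynomial σ R}
    (hq : q ∈ weightLE R w m) {i : ℕ} (hi : m < i) : (Z ^ i) q = 0 := by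
  have := hZ.pow i m q hq
  rwa [weightLE_eq_bot (by omega), Submodule.mem_bot] at this

end ShiftsWeight

theorem shiftsWeight_mulX (u : σ) : ShiftsWeight w (mulX R u) (w u) := fun m q hq => by
  rw [mem_weightLE_iff] at hq ⊢
  intro d hd
  simp only [LinearMap.mulLeft_apply, support_X_mul, Finset.mem_map, addLeftEmbedding_apply] at hd
  obtain ⟨d, hd, rfl⟩ := hd
  have := hq d hd
  simp only [map_add, Finsupp.weight_single, one_smul]
  omega

theorem shiftsWeight_dX (u : σ) : ShiftsWeight w (dX R u) (-w u) := fun m q hq => by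
  rw [mem_weightLE_iff] at hq ⊢
  intro d hd
  have hd' : d + Finsupp.single u 1 ∈ q.support := by
    rw [mem_support_iff] at hd ⊢
    exact fun h => hd (by
      change coeff d (pderiv u q) = 0
      rw [coeff_pderiv, h, zero_mul])
  have := hq _ hd'
  simp only [map_add, Finsupp.weight_single, one_smul] at this
  omega

theorem weight_le_degree {w : σ → ℕ} (hw : ∀ u, w u ≤ 1) (d : σ →₀ ℕ) :
    Finsupp.weight w d ≤ d.degree := by
  rw [Finsupp.weight_apply, Finsupp.degree_apply, Finsupp.sum]
  exact Finset.sum_le_sum fun u _ => by simpa using Nat.mul_le_mul_left (d u) (hw u)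

end WeightFiltration

section Euler

variable {R σ : Type*} [CommRing R]

theorem coeff_X_mul_pderiv (u : σ) (q : MvPolynomial σ R) (d : σ →₀ ℕ) :
    coeff d (X u * pderiv u q) = d u * coeff d q := by
  classical
  induction q using MvPolynomial.induction_on' with
  | monomial e r =>
    rw [X_mul_pderiv_monomial, coeff_smul, coeff_monomial]
    split_ifs with h <;> simp [h]
  | add p q hp hq => rw [map_add, mul_add, coeff_add, hp, hq, coeff_add, mul_add]

theorem X_mul_pderiv_eq_smul_iff [IsDomain R] [CharZero R] (u : σ) (a : ℕ)
    (q : MvPolynomial σ R) :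
    X u * pderiv u q = (a : R) • q ↔ q ∈ restrictSupport R {d | d u = a} := by
  rw [mem_restrictSupport_iff]
  constructor
  · intro h d hd
    have := congrArg (coeff d) h
    rw [coeff_X_mul_pderiv, coeff_smul, smul_eq_mul] at this
    exact_mod_cast mul_right_cancel₀ (mem_support_iff.mp hd) this
  · intro h
    ext d
    rw [coeff_X_mul_pderiv, coeff_smul, smul_eq_mul]
    by_cases hd : d ∈ q.support
    · rw [show d u = a from h hd]
    · rw [notMem_support_iff.mp hd, mul_zero, mul_zero]

theorem apply_mem_restrictSupport_of_commute [IsDomain R] [CharZero R]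
    {Z : Module.End R (MvPolynomial σ R)} {u : σ} (hZ : Commute Z (mulX R u * dX R u)) {a : ℕ}
    {q : MvPolynomial σ R} (hq : q ∈ restrictSupport R {d | d u = a}) :
    Z q ∈ restrictSupport R {d | d u = a} := by
  rw [← X_mul_pderiv_eq_smul_iff] at hq ⊢
  calc X u * pderiv u (Z q) = (mulX R u * dX R u) (Z q) := rfl
    _ = Z (X u * pderiv u q) := by rw [← Module.End.mul_apply, ← hZ.eq]; rfl
    _ = (a : R) • Z q := by rw [hq, map_smul]

end Euler

-- `rw [mul_neg]` and `simp [mul_neg]` do not fire in `Module.End`, whose `Neg` is not reducibly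
-- that of `Module.End.ring`; these restatements do.
theorem mul_neg_end {R M : Type*} [Semiring R] [AddCommGroup M] [Module R M]
    (a b : Module.End R M) : a * -b = -(a * b) :=
  mul_neg a b

theorem neg_mul_end {R M : Type*} [Semiring R] [AddCommGroup M] [Module R M]
    (a b : Module.End R M) : -a * b = -(a * b) :=
  neg_mul a b

section Twisted

variable (K : Type*) [Field K] (n n₁ n₂ : ℕ)

noncomputable def xRaise (i : Fin n) : Module.End K (A K n) :=
  if (i : ℕ) < n₁ then dX K (Sum.inl i) else mulX K (Sum.inl i)

noncomputable def xLower (j : Fin n) : Module.End K (A K n) :=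
  if (j : ℕ) < n₁ then -mulX K (Sum.inl j) else dX K (Sum.inl j)

noncomputable def yRaise (i : Fin n) : Module.End K (A K n) :=
  if (i : ℕ) < n₂ then mulX K (Sum.inr i) else dX K (Sum.inr i)

noncomputable def yLower (j : Fin n) : Module.End K (A K n) :=
  if (j : ℕ) < n₂ then dX K (Sum.inr j) else -mulX K (Sum.inr j)

variable {K n n₁ n₂}

theorem mul_xv (i : Fin n) : mul K n (xv K n i) = mulX K (Sum.inl i) := rfl

theorem mul_yv (i : Fin n) : mul K n (yv K n i) = mulX K (Sum.inr i) := rfl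

theorem pdx_eq_dX (i : Fin n) : pdx K n i = dX K (Sum.inl i) := rfl

theorem pdy_eq_dX (i : Fin n) : pdy K n i = dX K (Sum.inr i) := rfl

theorem mul_mul (f g : A K n) : mul K n (f * g) = mul K n f * mul K n g :=
  LinearMap.mulLeft_mul K _ f g

theorem isVarOp_xRaise (i : Fin n) : IsVarOp (Sum.inl i) (xRaise K n n₁ i) := by
  unfold xRaise; split_ifs
  exacts [Or.inr (Or.inr rfl), Or.inl rfl]

theorem isVarOp_xLower (i : Fin n) : IsVarOp (Sum.inl i) (xLower K n n₁ i) := by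
  unfold xLower; split_ifs
  exacts [Or.inr (Or.inl rfl), Or.inr (Or.inr rfl)]

theorem isVarOp_yRaise (i : Fin n) : IsVarOp (Sum.inr i) (yRaise K n n₂ i) := by
  unfold yRaise; split_ifs
  exacts [Or.inl rfl, Or.inr (Or.inr rfl)]

theorem isVarOp_yLower (i : Fin n) : IsVarOp (Sum.inr i) (yLower K n n₂ i) := by
  unfold yLower; split_ifs
  exacts [Or.inr (Or.inr rfl), Or.inr (Or.inl rfl)]

theorem xLower_mul_xRaise (s t : Fin n) :
    xLower K n n₁ s * xRaise K n n₁ t =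
      xRaise K n n₁ t * xLower K n n₁ s + if s = t then 1 else 0 := by
  rcases eq_or_ne s t with rfl | h
  · rw [if_pos rfl]
    unfold xLower xRaise; split_ifs
    · rw [mul_neg_end, dX_mul_mulX, neg_mul_end, if_pos rfl]; abel
    · rw [dX_mul_mulX, if_pos rfl]
  · rw [if_neg h, add_zero]
    exact (isVarOp_xLower s).commute (isVarOp_xRaise t) (by simpa using h)

theorem yLower_mul_yRaise (s t : Fin n) :
    yLower K n n₂ s * yRaise K n n₂ t =
      yRaise K n n₂ t * yLower K n n₂ s + if s = t then 1 else 0 := by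
  rcases eq_or_ne s t with rfl | h
  · rw [if_pos rfl]
    unfold yLower yRaise; split_ifs
    · rw [dX_mul_mulX, if_pos rfl]
    · rw [mul_neg_end, dX_mul_mulX, neg_mul_end, if_pos rfl]; abel
  · rw [if_neg h, add_zero]
    exact (isVarOp_yLower s).commute (isVarOp_yRaise t) (by simpa using h)

theorem Ex_eq (i j : Fin n) : Ex K n n₁ i j = xRaise K n n₁ i * xLower K n n₁ j := by
  unfold Ex xRaise xLower
  by_cases hi : (i : ℕ) < n₁ <;> by_cases hj : (j : ℕ) < n₁ <;>
    simp only [hi, hj, if_true, if_false, mul_mul, mul_xv, pdx_eq_dX, mul_neg_end]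
  rw [dX_mul_mulX]
  simp only [Sum.inl.injEq, neg_add, sub_eq_add_neg]

theorem Ey_eq (i j : Fin n) : Ey K n n₂ i j = yRaise K n n₂ i * yLower K n n₂ j := by
  unfold Ey yRaise yLower
  by_cases hi : (i : ℕ) < n₂ <;> by_cases hj : (j : ℕ) < n₂ <;>
    simp only [hi, hj, if_true, if_false, mul_mul, mul_yv, pdy_eq_dX, mul_neg_end]
  rw [dX_mul_mulX]
  simp only [Sum.inr.injEq, neg_add, sub_eq_add_neg]

theorem π_eq (i j : Fin n) :
    π K n n₁ n₂ i j = xRaise K n n₁ i * xLower K n n₁ j - yRaise K n n₂ j * yLower K n n₂ i := by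
  rw [π, Ex_eq, Ey_eq]

theorem lap_eq_neg_sum (h : n₁ ≤ n₂) :
    lap K n n₁ n₂ = -∑ t, xLower K n n₁ t * yLower K n n₂ t := by
  rw [lap, Finset.sum_filter, Finset.sum_filter, Finset.sum_filter, ← Finset.sum_sub_distrib,
    ← Finset.sum_add_distrib, ← Finset.sum_neg_distrib]
  refine Finset.sum_congr rfl fun t _ => ?_
  unfold xLower yLower
  by_cases h₁ : (t : ℕ) < n₁
  · simp [h₁, show (t : ℕ) < n₂ by omega, show ¬n₁ ≤ (t : ℕ) by omega,
      show ¬n₂ ≤ (t : ℕ) by omega, neg_mul_end, mul_xv, pdy_eq_dX]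
  by_cases h₂ : (t : ℕ) < n₂
  · simp [h₁, h₂, Nat.le_of_not_lt h₁, pdx_eq_dX, pdy_eq_dX]
  · simp only [h₁, h₂, mul_yv, pdx_eq_dX, mul_neg_end, neg_neg, if_false,
      Nat.le_of_not_lt h₂, if_true, and_false, sub_zero, zero_add]
    exact (commute_mulX_dX Sum.inr_ne_inl).eq

theorem commute_π_lap (h : n₁ ≤ n₂) (i j : Fin n) : Commute (π K n n₁ n₂ i j) (lap K n n₁ n₂) := by
  have hll : ∀ s t, Commute (xLower K n n₁ s) (xLower K n n₁ t) := fun s t => by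
    rcases eq_or_ne s t with rfl | hst
    · exact Commute.refl _
    · exact (isVarOp_xLower s).commute (isVarOp_xLower t) (by simpa using hst)
  have hLL : ∀ s t, Commute (yLower K n n₂ s) (yLower K n n₂ t) := fun s t => by
    rcases eq_or_ne s t with rfl | hst
    · exact Commute.refl _
    · exact (isVarOp_yLower s).commute (isVarOp_yLower t) (by simpa using hst)
  rw [π_eq, lap_eq_neg_sum h]
  refine (commute_sum_mul_of_ccr xLower_mul_xRaise yLower_mul_yRaise hll hLL
    (fun s t => (isVarOp_xLower s).commute (isVarOp_yLower t) Sum.inl_ne_inr)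
    (fun s t => (isVarOp_xRaise s).commute (isVarOp_yLower t) Sum.inl_ne_inr)
    (fun s t => (isVarOp_xLower s).commute (isVarOp_yRaise t) Sum.inl_ne_inr) i j).neg_left.symm

theorem commute_π_of_isVarOp {i j k : Fin n} (hik : i ≠ k) (hjk : j ≠ k) {u : Fin n ⊕ Fin n}
    (hu : u = Sum.inl k ∨ u = Sum.inr k) {Z : Module.End K (A K n)} (hZ : IsVarOp u Z) :
    Commute (π K n n₁ n₂ i j) Z := by
  have hne : ∀ t, t ≠ k → Sum.inl t ≠ u ∧ Sum.inr t ≠ u := fun t ht => by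
    rcases hu with rfl | rfl <;> simp [ht]
  rw [π_eq]
  exact ((isVarOp_xRaise i).commute hZ (hne i hik).1 |>.mul_left
      ((isVarOp_xLower j).commute hZ (hne j hjk).1)).sub_left
    (((isVarOp_yRaise j).commute hZ (hne j hjk).2).mul_left
      ((isVarOp_yLower i).commute hZ (hne i hik).2))

theorem π_apply_mem_restrictSupport [CharZero K] {i j k : Fin n} (hik : i ≠ k) (hjk : j ≠ k)
    {a b : ℕ} {q : A K n} (hq : q ∈ restrictSupport K {d | d (Sum.inl k) = a ∧ d (Sum.inr k) = b}) :
    π K n n₁ n₂ i j q ∈ restrictSupport K {d | d (Sum.inl k) = a ∧ d (Sum.inr k) = b} := by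
  have hE {u} (hu : u = Sum.inl k ∨ u = Sum.inr k) :
      Commute (π K n n₁ n₂ i j) (mulX K u * dX K u) :=
    (commute_π_of_isVarOp hik hjk hu (Or.inl rfl)).mul_right
      (commute_π_of_isVarOp hik hjk hu (Or.inr (Or.inr rfl)))
  have hx := apply_mem_restrictSupport_of_commute (hE (Or.inl rfl))
    (restrictSupport_mono K (fun _ hd => hd.1) hq)
  have hy := apply_mem_restrictSupport_of_commute (hE (Or.inr rfl))
    (restrictSupport_mono K (fun _ hd => hd.2) hq)
  rw [mem_restrictSupport_iff] at hx hy ⊢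
  exact fun d hd => ⟨hx hd, hy hd⟩

end Twisted

section Series

variable (K : Type*) [Field K] (n n₁ n₂ : ℕ) (hn : n₁ < n)

noncomputable def lapPlus : Module.End K (A K n) :=
  lap K n n₁ n₂ + pdx K n ⟨n₁, hn⟩ * pdy K n ⟨n₁, hn⟩

/-- The series defining `T` on monomials in which `x_{n₁+1}` and `y_{n₁+1}` have exponents `a`
and `b`, cut off after `N` terms. -/
noncomputable def Tseries (a b N : ℕ) : Module.End K (A K n) :=
  ∑ i ∈ Finset.range N, ((∏ r ∈ Finset.range i, ((a + r + 1) * (b + r + 1)) : ℕ) : K)⁻¹ •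
    (mul K n (xv K n ⟨n₁, hn⟩ * yv K n ⟨n₁, hn⟩) ^ i * lapPlus K n n₁ n₂ hn ^ i)

noncomputable def Tlin : Module.End K (A K n) :=
  (basisMonomials _ K).constr K (Tmono K n n₁ n₂ hn)

def twistWeight : Fin n ⊕ Fin n → ℕ :=
  Sum.elim (fun t => if n₂ ≤ (t : ℕ) then 1 else 0) (fun t => if (t : ℕ) < n₂ then 1 else 0)

variable {K n n₁ n₂}

theorem twistWeight_le_one (u : Fin n ⊕ Fin n) : twistWeight n n₂ u ≤ 1 := by
  rcases u with t | t <;> simp only [twistWeight, Sum.elim_inl, Sum.elim_inr] <;> split_ifs <;> simp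

theorem shiftsWeight_lapPlus (h : n₁ < n₂) (hn : n₁ < n) :
    ShiftsWeight (twistWeight n n₂) (lapPlus K n n₁ n₂ hn) (-1) := by
  set w := twistWeight n n₂
  have hXD : ∀ u v, w u = 0 → w v = 1 → ShiftsWeight w (mulX K u * dX K v) (-1) :=
    fun u v hu hv => ((shiftsWeight_mulX u).mul (shiftsWeight_dX v)).mono (by omega)
  have hDD : ∀ u v, w u + w v = 1 → ShiftsWeight w (dX K u * dX K v) (-1) :=
    fun u v huv => ((shiftsWeight_dX u).mul (shiftsWeight_dX v)).mono (by omega)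
  unfold lapPlus lap
  refine (((ShiftsWeight.sum fun t ht => ?_).sub (ShiftsWeight.sum fun t ht => ?_)).add
    (ShiftsWeight.sum fun t ht => ?_)).add ?_ <;>
    try simp only [Finset.mem_filter, Finset.mem_univ, true_and] at ht
  · exact hXD _ _ (by simp [w, twistWeight]; omega) (by simp [w, twistWeight]; omega)
  · exact hDD _ _ (by simp [w, twistWeight]; split_ifs <;> omega)
  · exact hXD _ _ (by simp [w, twistWeight]; omega) (by simp [w, twistWeight]; omega)
  · exact hDD _ _ (by simp [w, twistWeight]; split_ifs <;> omega)

theorem lapPlus_pow_apply_monomial (h : n₁ < n₂) (hn : n₁ < n) {d : (Fin n ⊕ Fin n) →₀ ℕ}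
    {i : ℕ} (hi : d.degree < i) : (lapPlus K n n₁ n₂ hn ^ i) (monomial d 1) = 0 :=
  (shiftsWeight_lapPlus h hn).pow_apply_eq_zero (m := d.degree)
    (weightLE_mono (Nat.cast_le.mpr (weight_le_degree twistWeight_le_one d))
      (monomial_mem_weightLE d 1))
    (Nat.cast_lt.mpr hi)

theorem Tmono_eq_Tseries (h : n₁ < n₂) (hn : n₁ < n) (d : (Fin n ⊕ Fin n) →₀ ℕ) {N : ℕ}
    (hN : d.degree < N) :
    Tmono K n n₁ n₂ hn d =
      Tseries K n n₁ n₂ hn (d (Sum.inl ⟨n₁, hn⟩)) (d (Sum.inr ⟨n₁, hn⟩)) N (monomial d 1) := by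
  rw [Tseries, LinearMap.sum_apply]
  refine (Finset.sum_congr rfl fun i _ => ?_).trans
    (Finset.sum_subset (Finset.range_subset_range.mpr hN) fun i _ hi => ?_)
  · rw [LinearMap.smul_apply, Module.End.mul_apply, mul, LinearMap.pow_mulLeft,
      LinearMap.mulLeft_apply]
    rfl
  · rw [Finset.mem_range, not_lt] at hi
    rw [LinearMap.smul_apply, Module.End.mul_apply,
      lapPlus_pow_apply_monomial h hn (Nat.lt_of_lt_of_le (Nat.lt_succ_self _) hi),
      map_zero, smul_zero]

theorem Tfun_eq_Tlin (hn : n₁ < n) (p : A K n) : Tfun K n n₁ n₂ hn p = Tlin K n n₁ n₂ hn p := by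
  rw [Tlin, Module.Basis.constr_apply]
  rfl

theorem Tlin_apply_eq_Tseries (h : n₁ < n₂) (hn : n₁ < n) {a b N : ℕ} {q : A K n}
    (hq : q ∈ restrictSupport K {d | d (Sum.inl ⟨n₁, hn⟩) = a ∧ d (Sum.inr ⟨n₁, hn⟩) = b})
    (hN : q.totalDegree < N) :
    Tlin K n n₁ n₂ hn q = Tseries K n n₁ n₂ hn a b N q := by
  have hq' : q ∈ restrictSupport K
      {d | d (Sum.inl ⟨n₁, hn⟩) = a ∧ d (Sum.inr ⟨n₁, hn⟩) = b ∧ d.degree < N} :=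
    fun d hd => ⟨(hq hd).1, (hq hd).2, (le_totalDegree hd).trans_lt hN⟩
  rw [restrictSupport_eq_span] at hq'
  refine LinearMap.eqOn_span' ?_ hq'
  rintro _ ⟨d, ⟨rfl, rfl, hd⟩, rfl⟩
  have := (basisMonomials _ K).constr_basis K (Tmono K n n₁ n₂ hn) d
  rw [coe_basisMonomials] at this
  rw [Tlin, this, Tmono_eq_Tseries h hn d hd]

theorem commute_π_Tseries (h : n₁ ≤ n₂) (hn : n₁ < n) {i j : Fin n} (hik : i ≠ ⟨n₁, hn⟩)
    (hjk : j ≠ ⟨n₁, hn⟩) (a b N : ℕ) :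
    Commute (π K n n₁ n₂ i j) (Tseries K n n₁ n₂ hn a b N) := by
  have hvar {u} (hu : u = Sum.inl ⟨n₁, hn⟩ ∨ u = Sum.inr ⟨n₁, hn⟩) {Z : Module.End K (A K n)}
      (hZ : IsVarOp u Z) : Commute (π K n n₁ n₂ i j) Z :=
    commute_π_of_isVarOp hik hjk hu hZ
  have hM : Commute (π K n n₁ n₂ i j) (mul K n (xv K n ⟨n₁, hn⟩ * yv K n ⟨n₁, hn⟩)) := by
    rw [mul_mul]
    exact (hvar (Or.inl rfl) (Or.inl rfl)).mul_right (hvar (Or.inr rfl) (Or.inl rfl))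
  have hL : Commute (π K n n₁ n₂ i j) (lapPlus K n n₁ n₂ hn) :=
    (commute_π_lap h i j).add_right
      ((hvar (Or.inl rfl) (Or.inr (Or.inr rfl))).mul_right
        (hvar (Or.inr rfl) (Or.inr (Or.inr rfl))))
  exact Commute.sum_right _ _ _ fun t _ =>
    ((hM.pow_right t).mul_right (hL.pow_right t)).smul_right _

end Series

theorem T_commutes_with_pi (h₁₂ : n₁ < n₂) (hn : n₁ < n)
    (i j : Fin n) (hi : (i : ℕ) ≠ n₁) (hj : (j : ℕ) ≠ n₁) (p : A F n) :
    Tfun F n n₁ n₂ hn (π F n n₁ n₂ i j p) = π F n n₁ n₂ i j (Tfun F n n₁ n₂ hn p) := by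
  set k : Fin n := ⟨n₁, hn⟩
  have hik : i ≠ k := Fin.ne_of_val_ne hi
  have hjk : j ≠ k := Fin.ne_of_val_ne hj
  suffices Tlin F n n₁ n₂ hn * π F n n₁ n₂ i j = π F n n₁ n₂ i j * Tlin F n n₁ n₂ hn by
    simpa only [Tfun_eq_Tlin, Module.End.mul_apply] using LinearMap.congr_fun this p
  refine (basisMonomials _ F).ext fun d => ?_
  simp only [coe_basisMonomials, Module.End.mul_apply]
  set m : A F n := monomial d 1
  have hm : m ∈ restrictSupport F
      {d' | d' (Sum.inl k) = d (Sum.inl k) ∧ d' (Sum.inr k) = d (Sum.inr k)} :=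
    (monomial_mem_restrictSupport F).mpr (Or.inl ⟨rfl, rfl⟩)
  set N := (π F n n₁ n₂ i j m).totalDegree + m.totalDegree + 1
  rw [Tlin_apply_eq_Tseries h₁₂ hn (π_apply_mem_restrictSupport hik hjk hm) (by omega : _ < N),
    Tlin_apply_eq_Tseries h₁₂ hn hm (by omega : _ < N), ← Module.End.mul_apply,
    ← Module.End.mul_apply, (commute_π_Tseries h₁₂.le hn hik hjk _ _ _).eq]

end Stmt6
end

section
/- Let F have characteristic 0, and consider the operators on F[x₁,...,xₙ,y₁,...,yₙ] given (for fixed i₁,i₁' ∈ {1,...,n₁} and j₁,j₁' ∈ {n₁+1,...,n₂}, with n₁ < n₂ ≤ n) by π(E_{j₁,i₁}) = −x_{i₁}x_{j₁} − y_{i₁}∂_{y_{j₁}}. Then the 'determinant operator' Δ^{j₁,j₁'}_{i₁,i₁'} := π(E_{j₁,i₁})π(E_{j₁',i₁'}) − π(E_{j₁,i₁'})π(E_{j₁',i₁}) factors as Δ^{j₁,j₁'}_{i₁,i₁'} = (x_{i₁'}y_{i₁} − x_{i₁}y_{i₁'})·(x_{j₁'}∂_{y_{j₁}} − x_{j₁}∂_{y_{j₁'}}).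 -/
open MvPolynomial

namespace Stmt7

variable (F : Type*) [Field F] [CharZero F] (n n₁ n₂ : ℕ)

abbrev A := MvPolynomial (Fin n ⊕ Fin n) F

noncomputable def xv (i : Fin n) : A F n := X (Sum.inl i)
noncomputable def yv (i : Fin n) : A F n := X (Sum.inr i)
noncomputable def mul (f : A F n) : Module.End F (A F n) := LinearMap.mulLeft F f
noncomputable def pdx (i : Fin n) : Module.End F (A F n) :=
  (pderiv (Sum.inl i : Fin n ⊕ Fin n)).toLinearMap
noncomputable def pdy (i : Fin n) : Module.End F (A F n) :=
  (pderiv (Sum.inr i : Fin n ⊕ Fin n)).toLinearMap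

/-- The twisted Laplace operator
`Δ̃ = Σ_{i=1}^{n₁} x_i∂_{y_i} − Σ_{r=n₁+1}^{n₂} ∂_{x_r}∂_{y_r} + Σ_{s=n₂+1}^{n} y_s∂_{x_s}`
(indices 0-based). -/
noncomputable def lap : Module.End F (A F n) :=
  (∑ i ∈ Finset.univ.filter (fun i : Fin n => (i : ℕ) < n₁),
      mul F n (xv F n i) * pdy F n i)
  - (∑ r ∈ Finset.univ.filter (fun r : Fin n => n₁ ≤ (r : ℕ) ∧ (r : ℕ) < n₂),
      pdx F n r * pdy F n r)
  + ∑ s ∈ Finset.univ.filter (fun s : Fin n => n₂ ≤ (s : ℕ)),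
      mul F n (yv F n s) * pdx F n s


/-- `π(E_{j,i}) = −x_i x_j − y_i ∂_{y_j}` for `i ∈ J₁`, `j ∈ J₂`. -/
noncomputable def piE (j i : Fin n) : Module.End F (A F n) :=
  -(mul F n (xv F n i * xv F n j)) - mul F n (yv F n i) * pdy F n j

/-- factorization of the determinant operator
`Δ^{j₁,j₁'}_{i₁,i₁'} = (x_{i₁'}y_{i₁} − x_{i₁}y_{i₁'})·(x_{j₁'}∂_{y_{j₁}} − x_{j₁}∂_{y_{j₁'}})`. -/
theorem det_op_factorization (h₁ : 1 ≤ n₁) (h₁₂ : n₁ < n₂) (h₂ : n₂ ≤ n)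
    (i₁ i₁' j₁ j₁' : Fin n) (hi₁ : (i₁ : ℕ) < n₁) (hi₁' : (i₁' : ℕ) < n₁)
    (hj₁ : n₁ ≤ (j₁ : ℕ) ∧ (j₁ : ℕ) < n₂) (hj₁' : n₁ ≤ (j₁' : ℕ) ∧ (j₁' : ℕ) < n₂) :
    piE F n j₁ i₁ * piE F n j₁' i₁' - piE F n j₁ i₁' * piE F n j₁' i₁ =
      mul F n (xv F n i₁' * yv F n i₁ - xv F n i₁ * yv F n i₁') *
        (mul F n (xv F n j₁') * pdy F n j₁ - mul F n (xv F n j₁) * pdy F n j₁') := by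
  have e1 : Sum.inl i₁ ≠ (Sum.inr j₁ : Fin n ⊕ Fin n) := by simp
  have e2 : Sum.inl i₁' ≠ (Sum.inr j₁ : Fin n ⊕ Fin n) := by simp
  have e3 : Sum.inl i₁ ≠ (Sum.inr j₁' : Fin n ⊕ Fin n) := by simp
  have e4 : Sum.inl i₁' ≠ (Sum.inr j₁' : Fin n ⊕ Fin n) := by simp
  have f1 : Sum.inr i₁ ≠ (Sum.inr j₁ : Fin n ⊕ Fin n) := by
    simp [Fin.ext_iff]; omega
  have f2 : Sum.inr i₁' ≠ (Sum.inr j₁ : Fin n ⊕ Fin n) := by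
    simp [Fin.ext_iff]; omega
  have f3 : Sum.inr i₁ ≠ (Sum.inr j₁' : Fin n ⊕ Fin n) := by
    simp [Fin.ext_iff]; omega
  have f4 : Sum.inr i₁' ≠ (Sum.inr j₁' : Fin n ⊕ Fin n) := by
    simp [Fin.ext_iff]; omega
  have g1 : Sum.inl j₁ ≠ (Sum.inr j₁ : Fin n ⊕ Fin n) := by simp
  have g2 : Sum.inl j₁' ≠ (Sum.inr j₁ : Fin n ⊕ Fin n) := by simp
  have g3 : Sum.inl j₁ ≠ (Sum.inr j₁' : Fin n ⊕ Fin n) := by simp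
  have g4 : Sum.inl j₁' ≠ (Sum.inr j₁' : Fin n ⊕ Fin n) := by simp
  refine LinearMap.ext fun p => ?_
  simp only [piE, mul, xv, yv, pdy, Module.End.mul_apply, LinearMap.sub_apply,
    LinearMap.neg_apply, LinearMap.mulLeft_apply, Derivation.coeFn_coe,
    map_sub, map_neg, map_mul, Derivation.leibniz, smul_eq_mul,
    pderiv_X_of_ne e1, pderiv_X_of_ne e2, pderiv_X_of_ne e3, pderiv_X_of_ne e4,
    pderiv_X_of_ne f1, pderiv_X_of_ne f2, pderiv_X_of_ne f3, pderiv_X_of_ne f4,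
    pderiv_X_of_ne g1, pderiv_X_of_ne g2, pderiv_X_of_ne g3, pderiv_X_of_ne g4]
  ring

end Stmt7
end

section
/- Let F have characteristic 0 and fix n₁ < n₂ ≤ n. With Δ̃ = Σ_{i=1}^{n₁} x_i∂_{y_i} − Σ_{r=n₁+1}^{n₂} ∂_{x_r}∂_{y_r} + Σ_{s=n₂+1}^{n} y_s∂_{x_s}, for any j₁, j₁' ∈ {n₁+1,...,n₂}, the operator x_{j₁'}∂_{y_{j₁}} − x_{j₁}∂_{y_{j₁'}} commutes with Δ̃ on F[x₁,...,xₙ,y₁,...,yₙ]. -/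
open MvPolynomial

namespace Stmt8

variable (F : Type*) [Field F] [CharZero F] (n n₁ n₂ : ℕ)

abbrev A := MvPolynomial (Fin n ⊕ Fin n) F

noncomputable def xv (i : Fin n) : A F n := X (Sum.inl i)
noncomputable def yv (i : Fin n) : A F n := X (Sum.inr i)
noncomputable def mul (f : A F n) : Module.End F (A F n) := LinearMap.mulLeft F f
noncomputable def pdx (i : Fin n) : Module.End F (A F n) :=
  (pderiv (Sum.inl i : Fin n ⊕ Fin n)).toLinearMap
noncomputable def pdy (i : Fin n) : Module.End F (A F n) :=
  (pderiv (Sum.inr i : Fin n ⊕ Fin n)).toLinearMap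

noncomputable def lap : Module.End F (A F n) :=
  (∑ i ∈ Finset.univ.filter (fun i : Fin n => (i : ℕ) < n₁),
      mul F n (xv F n i) * pdy F n i)
  - (∑ r ∈ Finset.univ.filter (fun r : Fin n => n₁ ≤ (r : ℕ) ∧ (r : ℕ) < n₂),
      pdx F n r * pdy F n r)
  + ∑ s ∈ Finset.univ.filter (fun s : Fin n => n₂ ≤ (s : ℕ)),
      mul F n (yv F n s) * pdx F n s

-- general commuting of pderivs
lemma pderiv_comm' {σ R : Type*} [CommRing R] [DecidableEq σ] (i j : σ) (p : MvPolynomial σ R) :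
    pderiv i (pderiv j p) = pderiv j (pderiv i p) := by
  induction p using MvPolynomial.induction_on with
  | C a => simp
  | add p q hp hq => simp [hp, hq]
  | mul_X p k hp =>
    by_cases hik : i = k <;> by_cases hjk : j = k <;>
      subst_vars <;> simp [pderiv_mul, hp, *] <;> ring

lemma commute_pd_pd (a b : Fin n ⊕ Fin n) :
    Commute ((pderiv a).toLinearMap : Module.End F (A F n)) (pderiv b).toLinearMap := by
  classical
  apply LinearMap.ext; intro p
  simp [Module.End.mul_apply, pderiv_comm']

lemma commute_mul_mul (f g : A F n) : Commute (mul F n f) (mul F n g) := by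
  apply LinearMap.ext; intro p
  simp [mul, Module.End.mul_apply, LinearMap.mulLeft_apply]; ring

lemma pd_mulX (a b : Fin n ⊕ Fin n) :
    ((pderiv a).toLinearMap : Module.End F (A F n)) * mul F n (X b)
      = mul F n (X b) * (pderiv a).toLinearMap
        + (if a = b then 1 else 0) := by
  classical
  apply LinearMap.ext; intro p
  by_cases h : a = b <;>
    simp [mul, Module.End.mul_apply, LinearMap.mulLeft_apply, pderiv_mul, pderiv_X, h,
      eq_comm, mul_comm, add_comm]

lemma commute_pd_mulX {a b : Fin n ⊕ Fin n} (h : a ≠ b) :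
    Commute ((pderiv a).toLinearMap : Module.End F (A F n)) (mul F n (X b)) := by
  have := pd_mulX F n a b
  simp [h] at this
  exact this

/-- for `j₁, j₁' ∈ {n₁+1,...,n₂}`, the operator
`x_{j₁'}∂_{y_{j₁}} − x_{j₁}∂_{y_{j₁'}}` commutes with `Δ̃`. -/
theorem lap_commutes_middle_xy (h₁ : 1 ≤ n₁) (h₁₂ : n₁ < n₂) (h₂ : n₂ ≤ n)
    (j₁ j₁' : Fin n) (hj₁ : n₁ ≤ (j₁ : ℕ) ∧ (j₁ : ℕ) < n₂)
    (hj₁' : n₁ ≤ (j₁' : ℕ) ∧ (j₁' : ℕ) < n₂) :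
    lap F n n₁ n₂ * (mul F n (xv F n j₁') * pdy F n j₁ - mul F n (xv F n j₁) * pdy F n j₁') =
      (mul F n (xv F n j₁') * pdy F n j₁ - mul F n (xv F n j₁) * pdy F n j₁') *
        lap F n n₁ n₂ := by
  classical
  -- commutator of a middle term with x_a ∂y_b
  have key : ∀ (r a b : Fin n),
      (pdx F n r * pdy F n r) * (mul F n (xv F n a) * pdy F n b)
        = (mul F n (xv F n a) * pdy F n b) * (pdx F n r * pdy F n r)
          + (if r = a then pdy F n r * pdy F n b else 0) := by
    intro r a b
    have h1 : pdx F n r * mul F n (xv F n a)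
        = mul F n (xv F n a) * pdx F n r + (if r = a then 1 else 0) := by
      have := pd_mulX F n (Sum.inl r) (Sum.inl a)
      simpa [pdx, xv, Sum.inl.injEq] using this
    have h2 : Commute (pdy F n r) (mul F n (xv F n a)) :=
      commute_pd_mulX F n (by simp : (Sum.inr r : Fin n ⊕ Fin n) ≠ Sum.inl a)
    have h3 : Commute (pdy F n b) (pdx F n r) := commute_pd_pd F n _ _
    have h4 : Commute (pdy F n b) (pdy F n r) := commute_pd_pd F n _ _
    calc pdx F n r * pdy F n r * (mul F n (xv F n a) * pdy F n b)
        = pdx F n r * (pdy F n r * mul F n (xv F n a)) * pdy F n b := by noncomm_ring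
      _ = pdx F n r * (mul F n (xv F n a) * pdy F n r) * pdy F n b := by rw [h2.eq]
      _ = (pdx F n r * mul F n (xv F n a)) * (pdy F n r * pdy F n b) := by noncomm_ring
      _ = (mul F n (xv F n a) * pdx F n r + (if r = a then 1 else 0)) *
            (pdy F n r * pdy F n b) := by rw [h1]
      _ = mul F n (xv F n a) * (pdx F n r * pdy F n r * pdy F n b)
            + (if r = a then pdy F n r * pdy F n b else 0) := by
          by_cases h : r = a <;> simp [h] <;> noncomm_ring
      _ = mul F n (xv F n a) * (pdy F n b * (pdx F n r * pdy F n r))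
            + (if r = a then pdy F n r * pdy F n b else 0) := by
          rw [show pdx F n r * pdy F n r * pdy F n b
              = pdy F n b * (pdx F n r * pdy F n r) by
            rw [mul_assoc, h4.symm.eq, ← mul_assoc, h3.symm.eq, mul_assoc]]
      _ = (mul F n (xv F n a) * pdy F n b) * (pdx F n r * pdy F n r)
            + (if r = a then pdy F n r * pdy F n b else 0) := by noncomm_ring
  set S := Finset.univ.filter (fun r : Fin n => n₁ ≤ (r : ℕ) ∧ (r : ℕ) < n₂) with hS
  have memS : ∀ {j : Fin n}, n₁ ≤ (j : ℕ) ∧ (j : ℕ) < n₂ → j ∈ S := by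
    intro j hj; simp [hS, hj.1, hj.2]
  have sumkey : ∀ (a b : Fin n), a ∈ S →
      (∑ r ∈ S, pdx F n r * pdy F n r) * (mul F n (xv F n a) * pdy F n b)
        = (mul F n (xv F n a) * pdy F n b) * (∑ r ∈ S, pdx F n r * pdy F n r)
          + pdy F n a * pdy F n b := by
    intro a b ha
    rw [Finset.sum_mul, Finset.mul_sum]
    simp_rw [key]
    rw [Finset.sum_add_distrib, Finset.sum_ite_eq' S a (fun r => pdy F n r * pdy F n b), if_pos ha]
  -- middle sum commutes with T
  have midT : Commute (∑ r ∈ S, pdx F n r * pdy F n r)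
      (mul F n (xv F n j₁') * pdy F n j₁ - mul F n (xv F n j₁) * pdy F n j₁') := by
    unfold Commute SemiconjBy
    rw [mul_sub, sub_mul, sumkey j₁' j₁ (memS hj₁'), sumkey j₁ j₁' (memS hj₁)]
    have := (commute_pd_pd F n (Sum.inr j₁' : Fin n ⊕ Fin n) (Sum.inr j₁)).eq
    rw [show pdy F n j₁' * pdy F n j₁ = pdy F n j₁ * pdy F n j₁' from this]
    noncomm_ring
  -- first sum commutes termwise
  have firstT : Commute (∑ i ∈ Finset.univ.filter (fun i : Fin n => (i : ℕ) < n₁),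
      mul F n (xv F n i) * pdy F n i)
      (mul F n (xv F n j₁') * pdy F n j₁ - mul F n (xv F n j₁) * pdy F n j₁') := by
    apply Commute.sum_left
    intro i _
    have gen : ∀ a b : Fin n, Commute (mul F n (xv F n i) * pdy F n i)
        (mul F n (xv F n a) * pdy F n b) := by
      intro a b
      exact ((commute_mul_mul F n (xv F n i) (xv F n a)).mul_right
          (commute_pd_mulX F n (by simp) |>.symm)).mul_left
        ((commute_pd_mulX F n (by simp)).mul_right (commute_pd_pd F n _ _))
    exact (gen j₁' j₁).sub_right (gen j₁ j₁')
  have lastT : Commute (∑ s ∈ Finset.univ.filter (fun s : Fin n => n₂ ≤ (s : ℕ)),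
      mul F n (yv F n s) * pdx F n s)
      (mul F n (xv F n j₁') * pdy F n j₁ - mul F n (xv F n j₁) * pdy F n j₁') := by
    apply Commute.sum_left
    intro s hs
    simp only [Finset.mem_filter] at hs
    have gen : ∀ (a b : Fin n), (a : ℕ) < n₂ → (b : ℕ) < n₂ →
        Commute (mul F n (yv F n s) * pdx F n s) (mul F n (xv F n a) * pdy F n b) := by
      intro a b ha hb
      have hsb : (Sum.inr b : Fin n ⊕ Fin n) ≠ Sum.inr s := by
        simp only [ne_eq, Sum.inr.injEq]
        intro h; rw [h] at hb; omega
      have hsa : (Sum.inl s : Fin n ⊕ Fin n) ≠ Sum.inl a := by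
        simp only [ne_eq, Sum.inl.injEq]
        intro h; rw [← h] at ha; omega
      exact ((commute_mul_mul F n (yv F n s) (xv F n a)).mul_right
          ((commute_pd_mulX F n hsb).symm)).mul_left
        ((commute_pd_mulX F n hsa).mul_right (commute_pd_pd F n _ _))
    exact (gen j₁' j₁ hj₁'.2 hj₁.2).sub_right (gen j₁ j₁' hj₁.2 hj₁'.2)
  unfold lap
  exact ((firstT.sub_left midT).add_left lastT).eq

end Stmt8
end

section
/- Let F have characteristic 0 and consider the 3×3 determinant expression Λ^{j₁,j₂,j₃}_{i₁,i₂,i₃} = Σ_{σ ∈ S₃} sgn(σ) Π_{t=1}^{3} z_{j_t, i_{σ(t)}} in a polynomial ring F[z_{j,i}]. Then any monomial z_{j₁,i₁} z_{j₂,i₂} z_{j₃,i₃} with i₁ < i₂ < i₃ and j₁ < j₂ < j₃ is congruent, modulo the ideal generated by all Λ^{j,j',j''}_{i,i',i''}, to a linear combination of the five monomials z_{j₁,i₂}z_{j₂,i₁}z_{j₃,i₃}, z_{j₁,i₃}z_{j₂,i₂}z_{j₃,i₁}, z_{j₁,i₁}z_{j₂,i₃}z_{j₃,i₂}, z_{j₁,i₂}z_{j₂,i₃}z_{j₃,i₁},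 z_{j₁,i₃}z_{j₂,i₁}z_{j₃,i₂}, each of which is strictly larger in the lexicographic order on multisets of index pairs. -/
open MvPolynomial

namespace Stmt12

variable (F : Type*) [Field F] [CharZero F]

/-- The variable `z_{j,i}`. -/
noncomputable def z (j i : ℕ) : MvPolynomial (ℕ × ℕ) F := X (j, i)

/-- The ideal `R₃` generated by all `3×3` minors `Λ^{j₁,j₂,j₃}_{i₁,i₂,i₃}`. -/
noncomputable def R₃ : Ideal (MvPolynomial (ℕ × ℕ) F) :=
  Ideal.span { p | ∃ (jv iv : Fin 3 → ℕ),
    p = Matrix.det (Matrix.of fun a b => z F (jv a) (iv b)) }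

/-- Lexicographic order on index pairs. -/
def plex (a b : ℕ × ℕ) : Prop := a.1 < b.1 ∨ (a.1 = b.1 ∧ a.2 < b.2)

/-- Lexicographic order on (sorted) triples of index pairs. -/
def tlex (a b : (ℕ × ℕ) × (ℕ × ℕ) × (ℕ × ℕ)) : Prop :=
  plex a.1 b.1 ∨ (a.1 = b.1 ∧ (plex a.2.1 b.2.1 ∨ (a.2.1 = b.2.1 ∧ plex a.2.2 b.2.2)))

/-- modulo `R₃`, the monomial `z_{j₁,i₁} z_{j₂,i₂} z_{j₃,i₃}` (with both
index triples strictly increasing) is congruent to the stated linear combination of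
five monomials, and each of these five monomials is strictly larger in the
lexicographic order on (sorted) multisets of index pairs. -/
theorem straightening_three_chain
    (i₁ i₂ i₃ j₁ j₂ j₃ : ℕ) (hi : i₁ < i₂ ∧ i₂ < i₃) (hj : j₁ < j₂ ∧ j₂ < j₃) :
    (z F j₁ i₁ * z F j₂ i₂ * z F j₃ i₃ -
        (z F j₁ i₂ * z F j₂ i₁ * z F j₃ i₃ + z F j₁ i₃ * z F j₂ i₂ * z F j₃ i₁ +
          z F j₁ i₁ * z F j₂ i₃ * z F j₃ i₂ - z F j₁ i₂ * z F j₂ i₃ * z F j₃ i₁ -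
          z F j₁ i₃ * z F j₂ i₁ * z F j₃ i₂) ∈ R₃ F) ∧
    tlex ((j₁, i₁), (j₂, i₂), (j₃, i₃)) ((j₁, i₂), (j₂, i₁), (j₃, i₃)) ∧
    tlex ((j₁, i₁), (j₂, i₂), (j₃, i₃)) ((j₁, i₃), (j₂, i₂), (j₃, i₁)) ∧
    tlex ((j₁, i₁), (j₂, i₂), (j₃, i₃)) ((j₁, i₁), (j₂, i₃), (j₃, i₂)) ∧
    tlex ((j₁, i₁), (j₂, i₂), (j₃, i₃)) ((j₁, i₂), (j₂, i₃), (j₃, i₁)) ∧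
    tlex ((j₁, i₁), (j₂, i₂), (j₃, i₃)) ((j₁, i₃), (j₂, i₁), (j₃, i₂)) := by
  refine ⟨?_, ?_, ?_, ?_, ?_, ?_⟩
  · apply Ideal.subset_span
    refine ⟨![j₁, j₂, j₃], ![i₁, i₂, i₃], ?_⟩
    rw [Matrix.det_fin_three]
    simp only [Matrix.of_apply, Matrix.cons_val', Matrix.cons_val_zero, Matrix.cons_val_one,
      Matrix.head_cons, Matrix.cons_val_two, Matrix.tail_cons]
    ring
  · exact Or.inl (Or.inr ⟨rfl, hi.1⟩)
  · exact Or.inl (Or.inr ⟨rfl, hi.1.trans hi.2⟩)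
  · exact Or.inr ⟨rfl, Or.inl (Or.inr ⟨rfl, hi.2⟩)⟩
  · exact Or.inl (Or.inr ⟨rfl, hi.1⟩)
  · exact Or.inl (Or.inr ⟨rfl, hi.1.trans hi.2⟩)

end Stmt12
end

section
/- Let F have characteristic 0 and let J₁, J₃ be disjoint finite sets of indices. In A = F[x_i, y_i : i ∈ J₁ ∪ J₃], consider products of the form g = (Π_{t=1}^{k₁} x_{s_{1,t}})(Π_{t=1}^{k₂} y_{s_{2,t}})(Π_{t=1}^{k₃} (x_{i_t}x_{j_t} − y_{i_t}y_{j_t})) with s_{1,t}, i_t ∈ J₁ and s_{2,t}, j_t ∈ J₃. Identify each such g with the multiset I(g) of pairs {(N+1, s_{1,t}), (j_t, i_t), (s_{2,t}, 0)} in (J₃∪{N+1}) × ({0}∪J₁) where N+1 is larger than all elements of J₃ and 0 is smaller than all elements of J₁. If the ordered products g range over (normalized) products all having the same multiset of first-block indices I₁ and same multiset of third-block indices I₃, and such that no I(g) contains a 3-chain (three pairs (j,i), (j',i'), (j'',i'') with i<i'<i'' and j<j'<j''), then these products g are linearly independent in A. -/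
open MvPolynomial

namespace Stmt13

variable (F : Type*) [Field F] [CharZero F]

/-- `x_i = X (Sum.inl i)`, `y_i = X (Sum.inr i)` in `A = F[x_i, y_i : i ∈ ℕ]`
(only variables with indices in `J₁ ∪ J₃` are used). -/
noncomputable def xv (i : ℕ) : MvPolynomial (ℕ ⊕ ℕ) F := X (Sum.inl i)
noncomputable def yv (i : ℕ) : MvPolynomial (ℕ ⊕ ℕ) F := X (Sum.inr i)

/-- A multiset `S` of index pairs contains a 3-chain if it contains three pairs
(counted with multiplicity) strictly increasing in both coordinates. -/
def HasThreeChain (S : Multiset (ℕ × ℕ)) : Prop :=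
  ∃ u v w : ℕ × ℕ, ({u, v, w} : Multiset (ℕ × ℕ)) ≤ S ∧
    u.1 < v.1 ∧ v.1 < w.1 ∧ u.2 < v.2 ∧ v.2 < w.2

/-- The set `φ(G^{I₁,I₃}_{k₁,k₂,k₃})` of normalized products
`(Π x_{s₁,t}) (Π y_{s₂,t}) (Π (x_{a_t} x_{b_t} − y_{a_t} y_{b_t}))` with prescribed
multisets `I₁` (of lower indices, from `J₁`) and `I₃` (of upper indices, from `J₃`),
whose associated multiset of pairs
`{(N+1, s₁,t)} ∪ {(b_t, a_t)} ∪ {(s₂,t, 0)}` contains no 3-chain. -/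
def G (J₁ J₃ : Finset ℕ) (N : ℕ) (I₁ I₃ : Multiset ℕ) :
    Set (MvPolynomial (ℕ ⊕ ℕ) F) :=
  { p | ∃ (k₁ k₂ k₃ : ℕ) (s₁ : Fin k₁ → ℕ) (s₂ : Fin k₂ → ℕ) (a b : Fin k₃ → ℕ),
      (∀ t, s₁ t ∈ J₁) ∧ (∀ t, s₂ t ∈ J₃) ∧ (∀ t, a t ∈ J₁) ∧ (∀ t, b t ∈ J₃) ∧
      Monotone s₁ ∧ Monotone s₂ ∧
      (∀ t t' : Fin k₃, t ≤ t' → (b t < b t' ∨ (b t = b t' ∧ a t ≤ a t'))) ∧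
      ((List.ofFn s₁ : Multiset ℕ) + (List.ofFn a : Multiset ℕ)) = I₁ ∧
      ((List.ofFn s₂ : Multiset ℕ) + (List.ofFn b : Multiset ℕ)) = I₃ ∧
      ¬ HasThreeChain
          ((List.ofFn (fun t => ((N + 1 : ℕ), s₁ t)) : Multiset (ℕ × ℕ)) +
            (List.ofFn (fun t => (b t, a t)) : Multiset (ℕ × ℕ)) +
            (List.ofFn (fun t => (s₂ t, (0 : ℕ))) : Multiset (ℕ × ℕ))) ∧
      p = (∏ t, xv F (s₁ t)) * (∏ t, yv F (s₂ t)) *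
            ∏ t, (xv F (a t) * xv F (b t) - yv F (a t) * yv F (b t)) }

/-!
Record a product `g` by its multiset `I(g)` of pairs, and a monomial of `g` by the split of `I(g)`
into an `x`-part and a `y`-part according to which term of each factor was chosen. As `J₁` and
`J₃` are disjoint, the monomial determines the margins (multisets of first and of second
coordinates) of both parts. Among multisets of pairs with given margins, an antichain for strict
dominance is the unique one of least weight `∑ j * i`, because exchanging the second coordinates of
a dominating pair lowers the weight. If `I(g)` has no 3-chain, sending the top row and every pair
that dominates another pair to the `x`-part splits `I(g)` into two antichains. The resulting
monomial therefore occurs in no other product of at most the same weight, while in `g` all splits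
producing it have the same sign, so its coefficient is a nonzero integer. The family is thus
triangular with respect to weight.
-/

def StrictDom (p q : ℕ × ℕ) : Prop := p.1 < q.1 ∧ p.2 < q.2

def IsDomAntichain (P : Multiset (ℕ × ℕ)) : Prop := ∀ p ∈ P, ∀ q ∈ P, ¬ StrictDom p q

def weight (P : Multiset (ℕ × ℕ)) : ℕ := (P.map fun p => p.1 * p.2).sum

lemma weight_add (P Q : Multiset (ℕ × ℕ)) : weight (P + Q) = weight P + weight Q := by
  simp [weight]

lemma weight_cons (p : ℕ × ℕ) (P : Multiset (ℕ × ℕ)) :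
    weight (p ::ₘ P) = p.1 * p.2 + weight P := by
  simp [weight]

lemma IsDomAntichain.mono {P Q : Multiset (ℕ × ℕ)} (hQ : IsDomAntichain Q) (h : P ≤ Q) :
    IsDomAntichain P :=
  fun p hp q hq => hQ p (Multiset.mem_of_le h hp) q (Multiset.mem_of_le h hq)

lemma IsDomAntichain.mk_mem {P : Multiset (ℕ × ℕ)} (hP : IsDomAntichain P) {R C : ℕ}
    (hR : R ∈ P.map Prod.fst) (hRmax : ∀ x ∈ P.map Prod.fst, x ≤ R)
    (hC : C ∈ P.map Prod.snd) (hCmin : ∀ x ∈ P.map Prod.snd, C ≤ x) : (R, C) ∈ P := by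
  obtain ⟨p, hp, rfl⟩ := Multiset.mem_map.mp hR
  obtain ⟨r, hr, rfl⟩ := Multiset.mem_map.mp hC
  by_cases hpr : p.2 = r.2
  · simpa [← hpr] using hp
  by_cases hrp : r.1 = p.1
  · simpa [← hrp] using hr
  have h₁ := hRmax r.1 (Multiset.mem_map_of_mem _ hr)
  have h₂ := hCmin p.2 (Multiset.mem_map_of_mem _ hp)
  exact absurd ⟨by omega, by omega⟩ (hP r hr p hp)

/-- An antichain contains the corner (largest first coordinate, smallest second coordinate),
which can be peeled off. -/
lemma IsDomAntichain.eq_of_map_eq {P Q : Multiset (ℕ × ℕ)} (hP : IsDomAntichain P)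
    (hQ : IsDomAntichain Q) (h₁ : P.map Prod.fst = Q.map Prod.fst)
    (h₂ : P.map Prod.snd = Q.map Prod.snd) : P = Q := by
  induction P using Multiset.strongInductionOn generalizing Q with
  | ih P ih =>
  rcases eq_or_ne P 0 with rfl | hP0
  · simpa [eq_comm] using h₁
  obtain ⟨R, hR, hRmax⟩ :=
    Multiset.exists_max_image id (s := P.map Prod.fst) (by simpa using hP0)
  obtain ⟨C, hC, hCmin⟩ :=
    Multiset.exists_min_image id (s := P.map Prod.snd) (by simpa using hP0)
  obtain ⟨P', rfl⟩ := Multiset.exists_cons_of_mem (hP.mk_mem hR hRmax hC hCmin)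
  obtain ⟨Q', rfl⟩ := Multiset.exists_cons_of_mem
    (hQ.mk_mem (h₁ ▸ hR) (h₁ ▸ hRmax) (h₂ ▸ hC) (h₂ ▸ hCmin))
  simp only [Multiset.map_cons, Multiset.cons_inj_right] at h₁ h₂ ⊢
  exact ih P' (Multiset.lt_cons_self _ _) (hP.mono (Multiset.le_cons_self _ _))
    (hQ.mono (Multiset.le_cons_self _ _)) h₁ h₂

/-- Exchanging the second coordinates of a dominating pair `p < q` keeps both margins and lowers
the weight by `(q.1 - p.1) * (q.2 - p.2)`. -/
lemma exists_weight_lt_of_not_isDomAntichain {P : Multiset (ℕ × ℕ)} (hP : ¬ IsDomAntichain P) :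
    ∃ P', P'.map Prod.fst = P.map Prod.fst ∧ P'.map Prod.snd = P.map Prod.snd ∧
      weight P' < weight P := by
  simp only [IsDomAntichain, not_forall, not_not] at hP
  obtain ⟨p, hp, q, hq, hpq⟩ := hP
  obtain ⟨M, rfl⟩ := Multiset.exists_cons_of_mem hp
  obtain ⟨M, rfl⟩ := Multiset.exists_cons_of_mem
    ((Multiset.mem_cons.mp hq).resolve_left fun h => (h ▸ hpq).1.false)
  refine ⟨(p.1, q.2) ::ₘ (q.1, p.2) ::ₘ M, by simp, by simp [Multiset.cons_swap], ?_⟩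
  simp only [weight_cons]
  have : p.1 * q.2 + q.1 * p.2 < p.1 * p.2 + q.1 * q.2 := by nlinarith [hpq.1, hpq.2]
  omega

lemma IsDomAntichain.weight_lt {P Q : Multiset (ℕ × ℕ)} (hQ : IsDomAntichain Q)
    (h₁ : P.map Prod.fst = Q.map Prod.fst) (h₂ : P.map Prod.snd = Q.map Prod.snd)
    (hne : P ≠ Q) : weight Q < weight P := by
  induction hw : weight P using Nat.strong_induction_on generalizing P with
  | _ n ih =>
  by_cases hP : IsDomAntichain P
  · exact absurd (hP.eq_of_map_eq hQ h₁ h₂) hne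
  obtain ⟨P', h₁', h₂', hlt⟩ := exists_weight_lt_of_not_isDomAntichain hP
  rcases eq_or_ne P' Q with rfl | hne'
  · omega
  · have := ih _ (hw ▸ hlt) (h₁'.trans h₁) (h₂'.trans h₂) hne' rfl
    omega

lemma IsDomAntichain.weight_le {P Q : Multiset (ℕ × ℕ)} (hQ : IsDomAntichain Q)
    (h₁ : P.map Prod.fst = Q.map Prod.fst) (h₂ : P.map Prod.snd = Q.map Prod.snd) :
    weight Q ≤ weight P := by
  rcases eq_or_ne P Q with rfl | hne
  exacts [le_rfl, (hQ.weight_lt h₁ h₂ hne).le]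

lemma hasThreeChain_of_mem {M : Multiset (ℕ × ℕ)} {p q r : ℕ × ℕ} (hp : p ∈ M) (hq : q ∈ M)
    (hr : r ∈ M) (hpq : StrictDom p q) (hqr : StrictDom q r) : HasThreeChain M := by
  have hne : p ≠ q ∧ p ≠ r ∧ q ≠ r := by
    unfold StrictDom at hpq hqr
    refine ⟨?_, ?_, ?_⟩ <;> rintro rfl <;> omega
  refine ⟨p, q, r, (Multiset.le_iff_subset ?_).mpr ?_, hpq.1, hqr.1, hpq.2, hqr.2⟩
  · simp [hne.1, hne.2.1, hne.2.2]
  · simp [Multiset.insert_eq_cons, Multiset.cons_subset, hp, hq, hr]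

/-- The pairs that go to the `x`-part of the leading monomial. -/
def IsRaised (n : ℕ) (M : Multiset (ℕ × ℕ)) (p : ℕ × ℕ) : Prop :=
  p.1 = n ∨ ∃ q ∈ M, StrictDom q p

lemma isDomAntichain_of_forall_isRaised {n : ℕ} {M P : Multiset (ℕ × ℕ)}
    (hM : ∀ p ∈ M, p.1 ≤ n) (hch : ¬ HasThreeChain M)
    (hP : ∀ p ∈ P, p ∈ M ∧ IsRaised n M p) : IsDomAntichain P := by
  intro p hp q hq hpq
  obtain ⟨hpM, hp | ⟨r, hr, hrp⟩⟩ := hP p hp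
  · have := hM q (hP q hq).1
    have := hpq.1
    omega
  · exact hch (hasThreeChain_of_mem hr hpM (hP q hq).1 hrp hpq)

lemma isDomAntichain_of_forall_not_isRaised {n : ℕ} {M P : Multiset (ℕ × ℕ)}
    (hP : ∀ p ∈ P, p ∈ M ∧ ¬ IsRaised n M p) : IsDomAntichain P :=
  fun p hp q hq hpq => (hP q hq).2 (Or.inr ⟨p, (hP p hp).1, hpq⟩)

theorem linearIndependent_of_triangular {ι R M β : Type*} [Ring R] [NoZeroDivisors R]
    [AddCommGroup M] [Module R M] [LinearOrder β] {v : ι → M} (f : ι → M →ₗ[R] R) (w : ι → β)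
    (hdiag : ∀ i, f i (v i) ≠ 0) (hoff : ∀ i j, i ≠ j → w j ≤ w i → f i (v j) = 0) :
    LinearIndependent R v := by
  classical
  rw [linearIndependent_iff']
  intro s c hsum i hi
  by_contra hci
  obtain ⟨i₀, hi₀, hmax⟩ :=
    Finset.exists_max_image (s.filter (c · ≠ 0)) w ⟨i, by simp [hi, hci]⟩
  rw [Finset.mem_filter] at hi₀
  have hsingle : ∑ j ∈ s, c j * f i₀ (v j) = c i₀ * f i₀ (v i₀) := by
    refine Finset.sum_eq_single_of_mem i₀ hi₀.1 fun j hj hne => ?_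
    by_cases hcj : c j = 0
    · simp [hcj]
    · simp [hoff i₀ j (Ne.symm hne) (hmax j (by simp [hj, hcj]))]
  have h0 := congrArg (f i₀) hsum
  simp only [map_sum, map_smul, smul_eq_mul, map_zero, hsingle] at h0
  exact mul_ne_zero hi₀.2 (hdiag i₀) h0

lemma prod_map_X_eq_monomial {σ R : Type*} [CommSemiring R] [DecidableEq σ] (E : Multiset σ) :
    (E.map X).prod = monomial (Multiset.toFinsupp E) (1 : R) := by
  induction E using Multiset.induction_on with
  | empty => simp
  | cons a E ih =>
    rw [Multiset.map_cons, Multiset.prod_cons, ih, ← Multiset.singleton_add,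
      Multiset.toFinsupp_add, Multiset.toFinsupp_singleton, X, monomial_mul, one_mul]

lemma add_eq_add_iff_of_separated {α : Type*} {p : α → Prop}
    {A B A' B' : Multiset α} (hA : ∀ x ∈ A, p x) (hB : ∀ x ∈ B, ¬ p x)
    (hA' : ∀ x ∈ A', p x) (hB' : ∀ x ∈ B', ¬ p x) :
    A + B = A' + B' ↔ A = A' ∧ B = B' := by
  classical
  refine ⟨fun h => ?_, fun ⟨rfl, rfl⟩ => rfl⟩
  have hAA' : A = A' := by
    simpa [Multiset.filter_add, Multiset.filter_eq_self.mpr hA, Multiset.filter_eq_nil.mpr hB,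
      Multiset.filter_eq_self.mpr hA', Multiset.filter_eq_nil.mpr hB'] using
      congrArg (Multiset.filter p) h
  exact ⟨hAA', add_left_cancel (hAA' ▸ h)⟩

/-- The data `k₁, k₂, k₃, s₁, s₂, a, b` of a product in `G`, forgetting normalization and the
index multisets `I₁, I₃`. -/
structure ProductData (J₁ J₃ : Finset ℕ) where
  k₁ : ℕ
  k₂ : ℕ
  k₃ : ℕ
  s₁ : Fin k₁ → ℕ
  s₂ : Fin k₂ → ℕ
  a : Fin k₃ → ℕ
  b : Fin k₃ → ℕ
  s₁_mem : ∀ t, s₁ t ∈ J₁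
  s₂_mem : ∀ t, s₂ t ∈ J₃
  a_mem : ∀ t, a t ∈ J₁
  b_mem : ∀ t, b t ∈ J₃

namespace ProductData

variable {J₁ J₃ : Finset ℕ} (d : ProductData J₁ J₃)

noncomputable def poly (R : Type*) [CommRing R] : MvPolynomial (ℕ ⊕ ℕ) R :=
  (∏ t, X (Sum.inl (d.s₁ t))) * (∏ t, X (Sum.inr (d.s₂ t))) *
    ∏ t, (X (Sum.inl (d.a t)) * X (Sum.inl (d.b t)) - X (Sum.inr (d.a t)) * X (Sum.inr (d.b t)))

def pairs (N : ℕ) : Multiset (ℕ × ℕ) :=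
  Finset.univ.val.map (fun t => (N + 1, d.s₁ t)) + Finset.univ.val.map (fun t => (d.b t, d.a t)) +
    Finset.univ.val.map (fun t => (d.s₂ t, 0))

lemma exists_of_mem_G {K : Type*} [Field K] {N : ℕ} {I₁ I₃ : Multiset ℕ}
    {p : MvPolynomial (ℕ ⊕ ℕ) K} (hp : p ∈ G K J₁ J₃ N I₁ I₃) :
    ∃ d : ProductData J₁ J₃, ¬ HasThreeChain (d.pairs N) ∧ d.poly K = p := by
  obtain ⟨k₁, k₂, k₃, s₁, s₂, a, b, hs₁, hs₂, ha, hb, -, -, -, -, -, hch, rfl⟩ := hp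
  exact ⟨⟨k₁, k₂, k₃, s₁, s₂, a, b, hs₁, hs₂, ha, hb⟩,
    by simpa only [pairs, Fin.univ_val_map], rfl⟩

/-- Indices of the `x`-variables of the monomial in which the factors `t ∈ S` of the third block
contribute `x_{a t} x_{b t}`. -/
def xIndices (S : Finset (Fin d.k₃)) : Multiset ℕ :=
  Finset.univ.val.map d.s₁ + S.val.map d.a + S.val.map d.b

def yIndices (S : Finset (Fin d.k₃)) : Multiset ℕ :=
  Sᶜ.val.map d.a + (Finset.univ.val.map d.s₂ + Sᶜ.val.map d.b)

def exponent (S : Finset (Fin d.k₃)) : Multiset (ℕ ⊕ ℕ) :=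
  (d.xIndices S).map Sum.inl + (d.yIndices S).map Sum.inr

lemma poly_eq_sum (R : Type*) [CommRing R] :
    d.poly R = ∑ S : Finset (Fin d.k₃), C ((-1) ^ Sᶜ.card) * ((d.exponent S).map X).prod := by
  simp only [poly, sub_eq_add_neg, Finset.prod_add, Finset.powerset_univ, Finset.mul_sum,
    ← Finset.compl_eq_univ_sdiff]
  refine Finset.sum_congr rfl fun S _ => ?_
  simp only [exponent, xIndices, yIndices, Multiset.map_add, Multiset.map_map, Multiset.prod_add,
    Function.comp_def, Finset.prod_map_val, Finset.prod_neg, Finset.prod_mul_distrib, map_pow,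
    map_neg, map_one]
  ring

lemma coeff_poly (R : Type*) [CommRing R] (E : Multiset (ℕ ⊕ ℕ)) :
    coeff (Multiset.toFinsupp E) (d.poly R) =
      ∑ S : Finset (Fin d.k₃), if d.exponent S = E then (-1) ^ Sᶜ.card else 0 := by
  simp only [poly_eq_sum, coeff_sum, coeff_C_mul, prod_map_X_eq_monomial, coeff_monomial,
    Multiset.toFinsupp.injective.eq_iff, mul_ite, mul_one, mul_zero]

lemma exponent_eq_exponent_iff (hdisj : Disjoint J₁ J₃) {d' : ProductData J₁ J₃}
    {S : Finset (Fin d.k₃)} {S' : Finset (Fin d'.k₃)} :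
    d.exponent S = d'.exponent S' ↔
      Finset.univ.val.map d.s₁ + S.val.map d.a = Finset.univ.val.map d'.s₁ + S'.val.map d'.a ∧
      S.val.map d.b = S'.val.map d'.b ∧ Sᶜ.val.map d.a = S'ᶜ.val.map d'.a ∧
      Finset.univ.val.map d.s₂ + Sᶜ.val.map d.b = Finset.univ.val.map d'.s₂ + S'ᶜ.val.map d'.b := by
  have hmem : ∀ {ι : Type} (T : Finset ι) (f : ι → ℕ) (P : ℕ → Prop), (∀ t, P (f t)) →
      ∀ x ∈ T.val.map f, P x :=
    fun T f P h => Multiset.forall_mem_map_iff.mpr fun t _ => h t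
  have hadd : ∀ {A B : Multiset ℕ} {P : ℕ → Prop}, (∀ x ∈ A, P x) → (∀ x ∈ B, P x) →
      ∀ x ∈ A + B, P x :=
    fun hA hB x hx => (Multiset.mem_add.mp hx).elim (hA x) (hB x)
  have hJ₃ : ∀ j ∈ J₃, j ∉ J₁ := fun j hj => Finset.disjoint_right.mp hdisj hj
  have ha := fun (e : ProductData J₁ J₃) T => hmem T e.a (· ∈ J₁) e.a_mem
  have hb := fun (e : ProductData J₁ J₃) T => hmem T e.b (· ∉ J₁) fun t => hJ₃ _ (e.b_mem t)
  have hs₁ := fun (e : ProductData J₁ J₃) => hmem Finset.univ e.s₁ (· ∈ J₁) e.s₁_mem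
  have hs₂ := fun (e : ProductData J₁ J₃) =>
    hmem Finset.univ e.s₂ (· ∉ J₁) fun t => hJ₃ _ (e.s₂_mem t)
  rw [exponent, exponent, add_eq_add_iff_of_separated (p := fun x => x.isLeft = true)
      (by simp) (by simp) (by simp) (by simp),
    (Multiset.map_injective Sum.inl_injective).eq_iff,
    (Multiset.map_injective Sum.inr_injective).eq_iff, xIndices, xIndices, yIndices, yIndices,
    add_eq_add_iff_of_separated (p := (· ∈ J₁)) (hadd (hs₁ d) (ha d S)) (hb d S)
      (hadd (hs₁ d') (ha d' S')) (hb d' S'),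
    add_eq_add_iff_of_separated (p := (· ∈ J₁)) (ha d Sᶜ) (hadd (hs₂ d) (hb d Sᶜ))
      (ha d' S'ᶜ) (hadd (hs₂ d') (hb d' S'ᶜ))]
  tauto

lemma card_eq_of_exponent_eq (hdisj : Disjoint J₁ J₃) {d' : ProductData J₁ J₃}
    {S : Finset (Fin d.k₃)} {S' : Finset (Fin d'.k₃)} (h : d.exponent S = d'.exponent S') :
    S.card = S'.card := by
  simpa using congrArg Multiset.card ((d.exponent_eq_exponent_iff hdisj).mp h).2.1

def xPart (N : ℕ) (S : Finset (Fin d.k₃)) : Multiset (ℕ × ℕ) :=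
  Finset.univ.val.map (fun t => (N + 1, d.s₁ t)) + S.val.map (fun t => (d.b t, d.a t))

def yPart (S : Finset (Fin d.k₃)) : Multiset (ℕ × ℕ) :=
  Finset.univ.val.map (fun t => (d.s₂ t, 0)) + Sᶜ.val.map (fun t => (d.b t, d.a t))

lemma pairs_eq_xPart_add_yPart (N : ℕ) (S : Finset (Fin d.k₃)) :
    d.pairs N = d.xPart N S + d.yPart S := by
  have hsplit : Finset.univ.val.map (fun t => (d.b t, d.a t)) =
      S.val.map (fun t => (d.b t, d.a t)) + Sᶜ.val.map (fun t => (d.b t, d.a t)) := by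
    rw [← Multiset.map_add, Finset.compl_eq_univ_sdiff, Finset.sdiff_val,
      add_tsub_cancel_of_le (Finset.val_le_iff.mpr (Finset.subset_univ S))]
  rw [pairs, xPart, yPart, hsplit]
  abel

lemma map_xPart_eq_and_map_yPart_eq (hdisj : Disjoint J₁ J₃) {d' : ProductData J₁ J₃}
    {S : Finset (Fin d.k₃)} {S' : Finset (Fin d'.k₃)} (h : d.exponent S = d'.exponent S')
    (N : ℕ) :
    (d.xPart N S).map Prod.fst = (d'.xPart N S').map Prod.fst ∧
      (d.xPart N S).map Prod.snd = (d'.xPart N S').map Prod.snd ∧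
      (d.yPart S).map Prod.fst = (d'.yPart S').map Prod.fst ∧
      (d.yPart S).map Prod.snd = (d'.yPart S').map Prod.snd := by
  obtain ⟨e₁, e₂, e₃, e₄⟩ := (d.exponent_eq_exponent_iff hdisj).mp h
  have hS := d.card_eq_of_exponent_eq hdisj h
  have hk₁ : d.k₁ = d'.k₁ := by
    have := congrArg Multiset.card e₁
    simp only [Multiset.card_add, Multiset.card_map, Finset.card_val, Finset.card_univ,
      Fintype.card_fin] at this
    omega
  have hk₂ : d.k₂ = d'.k₂ := by
    have := congrArg Multiset.card e₄
    have hc := congrArg Multiset.card e₃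
    simp only [Multiset.card_add, Multiset.card_map, Finset.card_val, Finset.card_univ,
      Fintype.card_fin] at this hc
    omega
  simp only [xPart, yPart, Multiset.map_add, Multiset.map_map, Function.comp_def,
    Multiset.map_const', Finset.card_val, Finset.card_univ, Fintype.card_fin]
  exact ⟨by rw [hk₁, ← e₂], e₁, e₄, by rw [hk₂, ← e₃]⟩

open Classical in
noncomputable def canonical (N : ℕ) : Finset (Fin d.k₃) :=
  Finset.univ.filter fun t => IsRaised (N + 1) (d.pairs N) (d.b t, d.a t)

variable {N : ℕ}

lemma fst_le_of_mem_pairs (hJ₃ : ∀ j ∈ J₃, j ≤ N) : ∀ p ∈ d.pairs N, p.1 ≤ N + 1 := by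
  intro p hp
  simp only [pairs, Multiset.mem_add, Multiset.mem_map] at hp
  rcases hp with (⟨t, -, rfl⟩ | ⟨t, -, rfl⟩) | ⟨t, -, rfl⟩
  · exact le_rfl
  · exact (hJ₃ _ (d.b_mem t)).trans (Nat.le_succ N)
  · exact (hJ₃ _ (d.s₂_mem t)).trans (Nat.le_succ N)

lemma isDomAntichain_xPart_canonical (hJ₃ : ∀ j ∈ J₃, j ≤ N) (hch : ¬ HasThreeChain (d.pairs N)) :
    IsDomAntichain (d.xPart N (d.canonical N)) := by
  refine isDomAntichain_of_forall_isRaised (d.fst_le_of_mem_pairs hJ₃) hch fun p hp => ⟨?_, ?_⟩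
  · rw [d.pairs_eq_xPart_add_yPart N (d.canonical N)]
    exact Multiset.mem_add.mpr (Or.inl hp)
  · simp only [xPart, Multiset.mem_add, Multiset.mem_map] at hp
    rcases hp with ⟨t, -, rfl⟩ | ⟨t, ht, rfl⟩
    · exact Or.inl rfl
    · simpa [canonical] using ht

lemma isDomAntichain_yPart_canonical (hJ₃ : ∀ j ∈ J₃, j ≤ N) :
    IsDomAntichain (d.yPart (d.canonical N)) := by
  refine isDomAntichain_of_forall_not_isRaised (n := N + 1) (M := d.pairs N)
    fun p hp => ⟨?_, ?_⟩
  · rw [d.pairs_eq_xPart_add_yPart N (d.canonical N)]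
    exact Multiset.mem_add.mpr (Or.inr hp)
  · simp only [yPart, Multiset.mem_add, Multiset.mem_map] at hp
    rcases hp with ⟨t, -, rfl⟩ | ⟨t, ht, rfl⟩
    · rintro (h | ⟨q, -, hq⟩)
      · have := hJ₃ _ (d.s₂_mem t)
        simp only at h
        omega
      · exact Nat.not_lt_zero _ hq.2
    · simpa [canonical] using ht

/-- Both parts of the canonical split of `d₀` are antichains, hence the unique multisets of least
weight with their margins. -/
lemma pairs_eq_of_exponent_eq_canonical (hdisj : Disjoint J₁ J₃) (hJ₃ : ∀ j ∈ J₃, j ≤ N)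
    {d₀ : ProductData J₁ J₃} (hch : ¬ HasThreeChain (d₀.pairs N))
    (hw : weight (d.pairs N) ≤ weight (d₀.pairs N)) {S : Finset (Fin d.k₃)}
    (h : d.exponent S = d₀.exponent (d₀.canonical N)) : d.pairs N = d₀.pairs N := by
  obtain ⟨hx₁, hx₂, hy₁, hy₂⟩ := d.map_xPart_eq_and_map_yPart_eq hdisj h N
  have hX := d₀.isDomAntichain_xPart_canonical hJ₃ hch
  have hY := d₀.isDomAntichain_yPart_canonical hJ₃
  rw [d.pairs_eq_xPart_add_yPart N S, d₀.pairs_eq_xPart_add_yPart N (d₀.canonical N)] at hw ⊢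
  rw [weight_add, weight_add] at hw
  by_contra hne
  have hne' : d.xPart N S ≠ d₀.xPart N (d₀.canonical N) ∨
      d.yPart S ≠ d₀.yPart (d₀.canonical N) := by
    by_contra! heq
    exact hne (by rw [heq.1, heq.2])
  rcases hne' with hXne | hYne
  · have := hX.weight_lt hx₁ hx₂ hXne
    have := hY.weight_le hy₁ hy₂
    omega
  · have := hX.weight_le hx₁ hx₂
    have := hY.weight_lt hy₁ hy₂ hYne
    omega

/-- Recovers a factor of `d.poly` from its pair: first coordinate `N + 1` marks the first block,
second coordinate `0` the second. -/
noncomputable def pairFactor (R : Type*) [CommRing R] (N : ℕ) (q : ℕ × ℕ) :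
    MvPolynomial (ℕ ⊕ ℕ) R :=
  if q.1 = N + 1 then X (Sum.inl q.2)
  else if q.2 = 0 then X (Sum.inr q.1)
  else X (Sum.inl q.2) * X (Sum.inl q.1) - X (Sum.inr q.2) * X (Sum.inr q.1)

lemma poly_eq_prod_pairFactor (R : Type*) [CommRing R] (hJ₁ : ∀ i ∈ J₁, 0 < i)
    (hJ₃ : ∀ j ∈ J₃, j ≤ N) : d.poly R = ((d.pairs N).map (pairFactor R N)).prod := by
  have ha : ∀ t, d.a t ≠ 0 := fun t => (hJ₁ _ (d.a_mem t)).ne'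
  have hb : ∀ t, d.b t ≠ N + 1 := fun t => by have := hJ₃ _ (d.b_mem t); omega
  have hs₂ : ∀ t, d.s₂ t ≠ N + 1 := fun t => by have := hJ₃ _ (d.s₂_mem t); omega
  simp only [poly, pairs, pairFactor, Multiset.map_add, Multiset.prod_add, Multiset.map_map,
    Function.comp_def, ha, hb, hs₂, if_true, if_false, Finset.prod_map_val]
  ring

lemma coeff_exponent_ne_zero (R : Type*) [CommRing R] [CharZero R] (hdisj : Disjoint J₁ J₃)
    (S : Finset (Fin d.k₃)) : coeff (Multiset.toFinsupp (d.exponent S)) (d.poly R) ≠ 0 := by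
  have hsign : ∀ S' : Finset (Fin d.k₃),
      (if d.exponent S' = d.exponent S then (-1 : R) ^ S'ᶜ.card else 0) =
        if d.exponent S' = d.exponent S then (-1) ^ Sᶜ.card else 0 := by
    intro S'
    split_ifs with h
    · rw [Finset.card_compl, Finset.card_compl, d.card_eq_of_exponent_eq hdisj h]
    · rfl
  rw [coeff_poly, Finset.sum_congr rfl fun S' _ => hsign S', Finset.sum_ite,
    Finset.sum_const_zero, add_zero, Finset.sum_const, nsmul_eq_mul, mul_comm, Ne,
    neg_one_pow_mul_eq_zero_iff, Nat.cast_eq_zero, Finset.card_eq_zero]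
  exact Finset.nonempty_iff_ne_empty.mp ⟨S, by simp⟩

lemma coeff_exponent_canonical_eq_zero (R : Type*) [CommRing R] (hdisj : Disjoint J₁ J₃)
    (hJ₁ : ∀ i ∈ J₁, 0 < i) (hJ₃ : ∀ j ∈ J₃, j ≤ N) {d₀ : ProductData J₁ J₃}
    (hch : ¬ HasThreeChain (d₀.pairs N)) (hw : weight (d.pairs N) ≤ weight (d₀.pairs N))
    (hne : d.poly R ≠ d₀.poly R) :
    coeff (Multiset.toFinsupp (d₀.exponent (d₀.canonical N))) (d.poly R) = 0 := by
  rw [coeff_poly]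
  refine Finset.sum_eq_zero fun S _ => if_neg fun h => hne ?_
  rw [d.poly_eq_prod_pairFactor R hJ₁ hJ₃, d₀.poly_eq_prod_pairFactor R hJ₁ hJ₃,
    d.pairs_eq_of_exponent_eq_canonical hdisj hJ₃ hch hw h]

end ProductData

/-- Lemma 3.2: the normalized products with fixed index multisets
`I₁, I₃` and no 3-chain are linearly independent. -/
theorem G_linearIndependent (J₁ J₃ : Finset ℕ) (N : ℕ)
    (hdisj : Disjoint J₁ J₃) (hJ₁ : ∀ i ∈ J₁, 0 < i) (hJ₃ : ∀ j ∈ J₃, j ≤ N)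
    (I₁ I₃ : Multiset ℕ) :
    LinearIndependent F
      (fun p : (G F J₁ J₃ N I₁ I₃) => (p : MvPolynomial (ℕ ⊕ ℕ) F)) := by
  choose d hch hd using fun p : G F J₁ J₃ N I₁ I₃ => ProductData.exists_of_mem_G p.2
  refine linearIndependent_of_triangular
    (fun i => lcoeff F (Multiset.toFinsupp ((d i).exponent ((d i).canonical N))))
    (fun i => weight ((d i).pairs N)) (fun i => ?_) (fun i j hij hw => ?_)
  · simpa [hd] using (d i).coeff_exponent_ne_zero F hdisj _
  · have hne : (d j).poly F ≠ (d i).poly F := by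
      rw [hd, hd]
      exact Subtype.coe_injective.ne (Ne.symm hij)
    simpa [hd] using (d j).coeff_exponent_canonical_eq_zero F hdisj hJ₁ hJ₃ (hch i) hw hne

end Stmt13
end

section
/- Let F have characteristic 0 and suppose 1 ≤ n₁ = n₂ < n, with m₂ ∈ ℕ. Every polynomial of the form (Π_{r=1}^{n₁} x_r^{l_r})(Π_{1≤p<q≤n₁} (x_p y_q − x_q y_p)^{k_{p,q}})(Π_{r≤n₁ < s} (x_r x_s − y_r y_s)^{l_{r,s}}) is annihilated by Δ̃ = Σ_{i=1}^{n₁} x_i∂_{y_i} + Σ_{s=n₁+1}^{n} y_s∂_{x_s}. -/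
open MvPolynomial

namespace Stmt18

variable (F : Type*) [Field F] [CharZero F] (n n₁ : ℕ)

abbrev A := MvPolynomial (Fin n ⊕ Fin n) F

noncomputable def xv (i : Fin n) : A F n := X (Sum.inl i)
noncomputable def yv (i : Fin n) : A F n := X (Sum.inr i)
noncomputable def mul (f : A F n) : Module.End F (A F n) := LinearMap.mulLeft F f
noncomputable def pdx (i : Fin n) : Module.End F (A F n) :=
  (pderiv (Sum.inl i : Fin n ⊕ Fin n)).toLinearMap
noncomputable def pdy (i : Fin n) : Module.End F (A F n) :=
  (pderiv (Sum.inr i : Fin n ⊕ Fin n)).toLinearMap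

/-- The twisted Laplace operator for `n₁ = n₂`:
`Δ̃ = Σ_{i=1}^{n₁} x_i∂_{y_i} + Σ_{s=n₁+1}^{n} y_s∂_{x_s}` (0-based). -/
noncomputable def lap : Module.End F (A F n) :=
  (∑ i ∈ Finset.univ.filter (fun i : Fin n => (i : ℕ) < n₁),
      mul F n (xv F n i) * pdy F n i) +
    ∑ s ∈ Finset.univ.filter (fun s : Fin n => n₁ ≤ (s : ℕ)),
      mul F n (yv F n s) * pdx F n s

lemma lap_apply (f : A F n) :
    lap F n n₁ f =
      (∑ i ∈ Finset.univ.filter (fun i : Fin n => (i : ℕ) < n₁),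
        xv F n i * pderiv (Sum.inr i) f) +
      ∑ s ∈ Finset.univ.filter (fun s : Fin n => n₁ ≤ (s : ℕ)),
        yv F n s * pderiv (Sum.inl s) f := by
  simp [lap, mul, pdx, pdy]

lemma lap_mul (f g : A F n) :
    lap F n n₁ (f * g) = lap F n n₁ f * g + f * lap F n n₁ g := by
  have h1 : ∀ (s : Finset (Fin n)) (v : Fin n → A F n) (j : Fin n → Fin n ⊕ Fin n),
      ∑ i ∈ s, v i * pderiv (j i) (f * g)
        = (∑ i ∈ s, v i * pderiv (j i) f) * g + f * ∑ i ∈ s, v i * pderiv (j i) g := by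
    intro s v j
    rw [Finset.sum_mul, Finset.mul_sum, ← Finset.sum_add_distrib]
    refine Finset.sum_congr rfl fun i _ => ?_
    rw [pderiv_mul]; ring
  rw [lap_apply, lap_apply, lap_apply, h1, h1]
  ring

lemma lap_one : lap F n n₁ (1 : A F n) = 0 := by
  simp [lap_apply]

lemma lap_mul_eq_zero {f g : A F n} (hf : lap F n n₁ f = 0) (hg : lap F n n₁ g = 0) :
    lap F n n₁ (f * g) = 0 := by
  rw [lap_mul, hf, hg]; ring

lemma lap_pow_eq_zero {f : A F n} (hf : lap F n n₁ f = 0) (k : ℕ) :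
    lap F n n₁ (f ^ k) = 0 := by
  induction k with
  | zero => simpa using lap_one F n n₁
  | succ k ih => rw [pow_succ]; exact lap_mul_eq_zero F n n₁ ih hf

lemma lap_prod_eq_zero {ι : Type*} (s : Finset ι) (f : ι → A F n)
    (hf : ∀ i ∈ s, lap F n n₁ (f i) = 0) :
    lap F n n₁ (∏ i ∈ s, f i) = 0 :=
  Finset.prod_induction f (fun g => lap F n n₁ g = 0)
    (fun _ _ => lap_mul_eq_zero F n n₁) (lap_one F n n₁) hf

lemma lap_x {r : Fin n} (hr : (r : ℕ) < n₁) : lap F n n₁ (xv F n r) = 0 := by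
  rw [lap_apply]
  rw [Finset.sum_eq_zero, Finset.sum_eq_zero, add_zero]
  · intro s hs
    simp only [Finset.mem_filter] at hs
    have : Sum.inl s ≠ (Sum.inl r : Fin n ⊕ Fin n) := by
      intro hh; injection hh with hh; omega
    simp [xv, pderiv_X, this]
  · intro i _
    simp [xv, pderiv_X]

lemma lap_xy {p q : Fin n} (hp : (p : ℕ) < n₁) (hq : (q : ℕ) < n₁) :
    lap F n n₁ (xv F n p * yv F n q - xv F n q * yv F n p) = 0 := by
  rw [lap_apply]
  have hxy : ∀ (i j : Fin n),
      pderiv (Sum.inr i : Fin n ⊕ Fin n) (xv F n j) = 0 := by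
    intro i j; simp [xv, pderiv_X]
  have hyx : ∀ (i j : Fin n),
      pderiv (Sum.inl i : Fin n ⊕ Fin n) (yv F n j) = 0 := by
    intro i j; simp [yv, pderiv_X]
  have hyy : ∀ (i j : Fin n),
      pderiv (Sum.inr i : Fin n ⊕ Fin n) (yv F n j)
        = if i = j then 1 else 0 := by
    intro i j
    rcases eq_or_ne i j with hij | hij
    · simp [hij, yv, pderiv_X]
    · simp [yv, pderiv_X, hij, Ne.symm hij]
  have e1 : ∑ s ∈ Finset.univ.filter (fun s : Fin n => n₁ ≤ (s : ℕ)),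
      yv F n s * pderiv (Sum.inl s) (xv F n p * yv F n q - xv F n q * yv F n p) = 0 := by
    refine Finset.sum_eq_zero fun s hs => ?_
    simp only [Finset.mem_filter] at hs
    have hp' : Sum.inl s ≠ (Sum.inl p : Fin n ⊕ Fin n) := by
      intro hh; injection hh with hh; omega
    have hq' : Sum.inl s ≠ (Sum.inl q : Fin n ⊕ Fin n) := by
      intro hh; injection hh with hh; omega
    simp [map_sub, pderiv_mul, hyx, xv, pderiv_X, hp', hq']
  rw [e1, add_zero]
  have e2 : ∀ i ∈ Finset.univ.filter (fun i : Fin n => (i : ℕ) < n₁),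
      xv F n i * pderiv (Sum.inr i) (xv F n p * yv F n q - xv F n q * yv F n p)
        = (if i = q then xv F n i * xv F n p else 0)
          - (if i = p then xv F n i * xv F n q else 0) := by
    intro i _
    rw [map_sub, pderiv_mul, pderiv_mul, hxy, hxy, hyy, hyy]
    split <;> split <;> ring
  rw [Finset.sum_congr rfl e2, Finset.sum_sub_distrib,
    Finset.sum_ite_eq' _ q (fun i => xv F n i * xv F n p),
    Finset.sum_ite_eq' _ p (fun i => xv F n i * xv F n q)]
  simp only [Finset.mem_filter, Finset.mem_univ, true_and, hp, hq, if_pos]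
  ring

lemma lap_xxyy {r s : Fin n} (hr : (r : ℕ) < n₁) (hs : n₁ ≤ (s : ℕ)) :
    lap F n n₁ (xv F n r * xv F n s - yv F n r * yv F n s) = 0 := by
  rw [lap_apply]
  have e1 : ∀ i ∈ Finset.univ.filter (fun i : Fin n => (i : ℕ) < n₁),
      xv F n i * pderiv (Sum.inr i) (xv F n r * xv F n s - yv F n r * yv F n s)
        = -(if i = r then xv F n i * yv F n s else 0) := by
    intro i hi
    simp only [Finset.mem_filter] at hi
    have hs' : i ≠ s := by
      intro hh; have := congrArg (Fin.val) hh; omega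
    have hx0 : ∀ j : Fin n, pderiv (Sum.inr i : Fin n ⊕ Fin n) (xv F n j) = 0 := by
      intro j; simp [xv, pderiv_X]
    have hyy : ∀ j : Fin n, pderiv (Sum.inr i : Fin n ⊕ Fin n) (yv F n j)
        = if i = j then 1 else 0 := by
      intro j
      rcases eq_or_ne i j with hij | hij
      · simp [hij, yv, pderiv_X]
      · simp [yv, pderiv_X, hij, Ne.symm hij]
    rw [map_sub, pderiv_mul, pderiv_mul, hx0, hx0, hyy, hyy, if_neg hs']
    rcases eq_or_ne i r with hir | hir
    · rw [if_pos hir, if_pos hir]; subst hir; ring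
    · rw [if_neg hir, if_neg hir]; ring
  have e2 : ∀ t ∈ Finset.univ.filter (fun t : Fin n => n₁ ≤ (t : ℕ)),
      yv F n t * pderiv (Sum.inl t) (xv F n r * xv F n s - yv F n r * yv F n s)
        = (if t = s then yv F n t * xv F n r else 0) := by
    intro t ht
    simp only [Finset.mem_filter] at ht
    have hr' : t ≠ r := by
      intro hh; have := congrArg (Fin.val) hh; omega
    have hy0 : ∀ j : Fin n, pderiv (Sum.inl t : Fin n ⊕ Fin n) (yv F n j) = 0 := by
      intro j; simp [yv, pderiv_X]
    have hxx : ∀ j : Fin n, pderiv (Sum.inl t : Fin n ⊕ Fin n) (xv F n j)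
        = if t = j then 1 else 0 := by
      intro j
      rcases eq_or_ne t j with hij | hij
      · simp [hij, xv, pderiv_X]
      · simp [xv, pderiv_X, hij, Ne.symm hij]
    rw [map_sub, pderiv_mul, pderiv_mul, hy0, hy0, hxx, hxx, if_neg hr']
    rcases eq_or_ne t s with hts | hts
    · rw [if_pos hts, if_pos hts]; subst hts; ring
    · rw [if_neg hts, if_neg hts]; ring
  rw [Finset.sum_congr rfl e1, Finset.sum_congr rfl e2, Finset.sum_neg_distrib,
    Finset.sum_ite_eq' _ r (fun i => xv F n i * yv F n s),
    Finset.sum_ite_eq' _ s (fun t => yv F n t * xv F n r)]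
  simp only [Finset.mem_filter, Finset.mem_univ, true_and, hr, hs, if_pos]
  ring

/-- every polynomial
`(Π_{r≤n₁} x_r^{l_r}) (Π_{p<q≤n₁} (x_p y_q − x_q y_p)^{k_{p,q}})
 (Π_{r≤n₁<s} (x_r x_s − y_r y_s)^{l_{r,s}})`
is annihilated by `Δ̃ = Σ_{i≤n₁} x_i∂_{y_i} + Σ_{s>n₁} y_s∂_{x_s}`. -/
theorem lap_annihilates_product' (h₁ : 1 ≤ n₁) (h : n₁ < n) (m₂ : ℕ)
    (l : Fin n → ℕ) (K L : Fin n → Fin n → ℕ) :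
    lap F n n₁
      ((∏ r ∈ Finset.univ.filter (fun r : Fin n => (r : ℕ) < n₁), xv F n r ^ l r) *
        (∏ p ∈ Finset.univ.filter (fun p : Fin n => (p : ℕ) < n₁),
          ∏ q ∈ Finset.univ.filter (fun q : Fin n => (q : ℕ) < n₁),
            (if p < q then (xv F n p * yv F n q - xv F n q * yv F n p) ^ K p q else 1)) *
        ∏ r ∈ Finset.univ.filter (fun r : Fin n => (r : ℕ) < n₁),
          ∏ s ∈ Finset.univ.filter (fun s : Fin n => n₁ ≤ (s : ℕ)),
            (xv F n r * xv F n s - yv F n r * yv F n s) ^ L r s) = 0 := by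
  refine lap_mul_eq_zero F n n₁ (lap_mul_eq_zero F n n₁ ?_ ?_) ?_
  · refine lap_prod_eq_zero F n n₁ _ _ fun r hr => ?_
    simp only [Finset.mem_filter] at hr
    exact lap_pow_eq_zero F n n₁ (lap_x F n n₁ hr.2) _
  · refine lap_prod_eq_zero F n n₁ _ _ fun p hp => ?_
    simp only [Finset.mem_filter] at hp
    refine lap_prod_eq_zero F n n₁ _ _ fun q hq => ?_
    simp only [Finset.mem_filter] at hq
    split
    · exact lap_pow_eq_zero F n n₁ (lap_xy F n n₁ hp.2 hq.2) _
    · exact lap_one F n n₁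
  · refine lap_prod_eq_zero F n n₁ _ _ fun r hr => ?_
    simp only [Finset.mem_filter] at hr
    refine lap_prod_eq_zero F n n₁ _ _ fun s hs => ?_
    simp only [Finset.mem_filter] at hs
    exact lap_pow_eq_zero F n n₁ (lap_xxyy F n n₁ hr.2 hs.2) _

end Stmt18
end

section
/- Let F have characteristic 0, fix n₁ < n₂ ≤ n, and let Δ̃ = Σ_{i=1}^{n₁} x_i∂_{y_i} − Σ_{r=n₁+1}^{n₂} ∂_{x_r}∂_{y_r} + Σ_{s=n₂+1}^{n} y_s∂_{x_s}. Then for j₁, j₁' ∈ {n₁+1,...,n₂}, i₁, i₁' ∈ {1,...,n₁}, and any Δ̃-harmonic polynomial h ∈ A (i.e., Δ̃h = 0), the polynomial (x_{i₁'}y_{i₁} − x_{i₁}y_{i₁'})(x_{j₁'}∂_{y_{j₁}} − x_{j₁}∂_{y_{j₁'}})(h) is also Δ̃-harmonic. -/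
open MvPolynomial

namespace Stmt19

variable (F : Type*) [Field F] [CharZero F] (n n₁ n₂ : ℕ)

abbrev A := MvPolynomial (Fin n ⊕ Fin n) F

noncomputable def xv (i : Fin n) : A F n := X (Sum.inl i)
noncomputable def yv (i : Fin n) : A F n := X (Sum.inr i)
noncomputable def mul (f : A F n) : Module.End F (A F n) := LinearMap.mulLeft F f
noncomputable def pdx (i : Fin n) : Module.End F (A F n) :=
  (pderiv (Sum.inl i : Fin n ⊕ Fin n)).toLinearMap
noncomputable def pdy (i : Fin n) : Module.End F (A F n) :=
  (pderiv (Sum.inr i : Fin n ⊕ Fin n)).toLinearMap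

/-- The twisted Laplace operator
`Δ̃ = Σ_{i=1}^{n₁} x_i∂_{y_i} − Σ_{r=n₁+1}^{n₂} ∂_{x_r}∂_{y_r} + Σ_{s=n₂+1}^{n} y_s∂_{x_s}`
(indices 0-based). -/
noncomputable def lap : Module.End F (A F n) :=
  (∑ i ∈ Finset.univ.filter (fun i : Fin n => (i : ℕ) < n₁),
      mul F n (xv F n i) * pdy F n i)
  - (∑ r ∈ Finset.univ.filter (fun r : Fin n => n₁ ≤ (r : ℕ) ∧ (r : ℕ) < n₂),
      pdx F n r * pdy F n r)
  + ∑ s ∈ Finset.univ.filter (fun s : Fin n => n₂ ≤ (s : ℕ)),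
      mul F n (yv F n s) * pdx F n s


set_option linter.unusedSectionVars false

theorem pd_comm' {σ R : Type*} [CommSemiring R] (u v : σ) (p : MvPolynomial σ R) :
    pderiv u (pderiv v p) = pderiv v (pderiv u p) := by
  classical
  induction p using MvPolynomial.induction_on with
  | C a => simp
  | add p q hp hq => simp [hp, hq]
  | mul_X p i hp =>
      simp only [pderiv_mul, pderiv_X, Pi.single_apply, map_add, hp, apply_ite (pderiv u),
        apply_ite (pderiv v), map_one, map_zero, pderiv_one]
      split_ifs <;> ring

theorem lap_apply (f : A F n) :
    lap F n n₁ n₂ f =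
      (∑ i ∈ Finset.univ.filter (fun i : Fin n => (i : ℕ) < n₁),
          X (Sum.inl i) * pderiv (Sum.inr i) f)
      - (∑ r ∈ Finset.univ.filter (fun r : Fin n => n₁ ≤ (r : ℕ) ∧ (r : ℕ) < n₂),
          pderiv (Sum.inl r) (pderiv (Sum.inr r) f))
      + ∑ s ∈ Finset.univ.filter (fun s : Fin n => n₂ ≤ (s : ℕ)),
          X (Sum.inr s) * pderiv (Sum.inl s) f := by
  simp [lap, mul, xv, yv, pdx, pdy, LinearMap.add_apply, LinearMap.sub_apply,
    LinearMap.sum_apply, Module.End.mul_apply, LinearMap.mulLeft_apply]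

theorem lap_pdy (j : Fin n) (hj : (j : ℕ) < n₂) (g : A F n) :
    lap F n n₁ n₂ (pderiv (Sum.inr j) g) = pderiv (Sum.inr j) (lap F n n₁ n₂ g) := by
  rw [lap_apply, lap_apply, map_add, map_sub, map_sum, map_sum, map_sum]
  have e1 := Finset.sum_congr rfl fun (i : Fin n)
      (hi : i ∈ Finset.univ.filter (fun i : Fin n => (i : ℕ) < n₁)) =>
    (by rw [pderiv_mul, pderiv_X_of_ne (show (Sum.inl i : Fin n ⊕ Fin n) ≠ Sum.inr j by simp),
          zero_mul, zero_add, pd_comm'] :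
      pderiv (Sum.inr j) (X (Sum.inl i) * pderiv (Sum.inr i) g)
        = X (Sum.inl i) * pderiv (Sum.inr i) (pderiv (Sum.inr j) g))
  have e2 := Finset.sum_congr rfl fun (r : Fin n)
      (hr : r ∈ Finset.univ.filter (fun r : Fin n => n₁ ≤ (r : ℕ) ∧ (r : ℕ) < n₂)) =>
    (by rw [← pd_comm' (Sum.inl r) (Sum.inr j), ← pd_comm' (Sum.inr r) (Sum.inr j)] :
      pderiv (Sum.inr j) (pderiv (Sum.inl r) (pderiv (Sum.inr r) g))
        = pderiv (Sum.inl r) (pderiv (Sum.inr r) (pderiv (Sum.inr j) g)))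
  have e3 := Finset.sum_congr rfl fun (s : Fin n)
      (hs : s ∈ Finset.univ.filter (fun s : Fin n => n₂ ≤ (s : ℕ))) => show
      pderiv (Sum.inr j) (X (Sum.inr s) * pderiv (Sum.inl s) g)
        = X (Sum.inr s) * pderiv (Sum.inl s) (pderiv (Sum.inr j) g) by
    simp only [Finset.mem_filter, Finset.mem_univ, true_and] at hs
    rw [pderiv_mul,
      pderiv_X_of_ne (show (Sum.inr s : Fin n ⊕ Fin n) ≠ Sum.inr j by
        simp only [ne_eq, Sum.inr.injEq]; intro h; subst h; omega), zero_mul, zero_add,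
      pd_comm']
  rw [e1, e2, e3]

theorem lap_xmul (j : Fin n) (hj : n₁ ≤ (j : ℕ) ∧ (j : ℕ) < n₂) (g : A F n) :
    lap F n n₁ n₂ (X (Sum.inl j) * g) =
      X (Sum.inl j) * lap F n n₁ n₂ g - pderiv (Sum.inr j) g := by
  classical
  rw [lap_apply, lap_apply, mul_add, mul_sub, Finset.mul_sum, Finset.mul_sum, Finset.mul_sum]
  have e1 : (∑ i ∈ Finset.univ.filter (fun i : Fin n => (i : ℕ) < n₁),
        X (Sum.inl i) * pderiv (Sum.inr i) (X (Sum.inl j) * g))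
      = ∑ i ∈ Finset.univ.filter (fun i : Fin n => (i : ℕ) < n₁),
        X (Sum.inl j) * (X (Sum.inl i) * pderiv (Sum.inr i) g) := by
    refine Finset.sum_congr rfl fun i hi => ?_
    rw [pderiv_mul, pderiv_X_of_ne (by simp)]
    ring
  have e3 : (∑ s ∈ Finset.univ.filter (fun s : Fin n => n₂ ≤ (s : ℕ)),
        X (Sum.inr s) * pderiv (Sum.inl s) (X (Sum.inl j) * g))
      = ∑ s ∈ Finset.univ.filter (fun s : Fin n => n₂ ≤ (s : ℕ)),
        X (Sum.inl j) * (X (Sum.inr s) * pderiv (Sum.inl s) g) := by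
    refine Finset.sum_congr rfl fun s hs => ?_
    simp only [Finset.mem_filter, Finset.mem_univ, true_and] at hs
    rw [pderiv_mul, pderiv_X_of_ne (by simp; omega)]
    ring
  have e2 : (∑ r ∈ Finset.univ.filter (fun r : Fin n => n₁ ≤ (r : ℕ) ∧ (r : ℕ) < n₂),
        pderiv (Sum.inl r) (pderiv (Sum.inr r) (X (Sum.inl j) * g)))
      = (∑ r ∈ Finset.univ.filter (fun r : Fin n => n₁ ≤ (r : ℕ) ∧ (r : ℕ) < n₂),
          X (Sum.inl j) * pderiv (Sum.inl r) (pderiv (Sum.inr r) g))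
        + pderiv (Sum.inr j) g := by
    have step : ∀ r : Fin n,
        pderiv (Sum.inl r) (pderiv (Sum.inr r) (X (Sum.inl j) * g))
        = X (Sum.inl j) * pderiv (Sum.inl r) (pderiv (Sum.inr r) g)
          + (if r = j then pderiv (Sum.inr r) g else 0) := by
      intro r
      rw [pderiv_mul, pderiv_X_of_ne (by simp), zero_mul, zero_add, pderiv_mul]
      by_cases h : r = j
      · subst h; rw [pderiv_X_self, if_pos rfl]; ring
      · rw [pderiv_X_of_ne (show (Sum.inl j : Fin n ⊕ Fin n) ≠ Sum.inl r by
            simp only [ne_eq, Sum.inl.injEq]; exact fun hh => h hh.symm), if_neg h]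
        ring
    rw [Finset.sum_congr rfl fun r _ => step r, Finset.sum_add_distrib,
      Finset.sum_ite_eq' _ j _]
    have : j ∈ Finset.univ.filter (fun r : Fin n => n₁ ≤ (r : ℕ) ∧ (r : ℕ) < n₂) := by
      simp [hj.1, hj.2]
    rw [if_pos this]
  rw [e1, e2, e3]
  ring

theorem lap_qmul (hn : n₁ ≤ n₂) (i₁ i₁' : Fin n) (hi₁ : (i₁ : ℕ) < n₁) (hi₁' : (i₁' : ℕ) < n₁) (f : A F n) :
    lap F n n₁ n₂ ((X (Sum.inl i₁') * X (Sum.inr i₁) - X (Sum.inl i₁) * X (Sum.inr i₁')) * f)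
      = (X (Sum.inl i₁') * X (Sum.inr i₁) - X (Sum.inl i₁) * X (Sum.inr i₁'))
          * lap F n n₁ n₂ f := by
  classical
  set q : A F n := X (Sum.inl i₁') * X (Sum.inr i₁) - X (Sum.inl i₁) * X (Sum.inr i₁') with hqdef
  rw [lap_apply, lap_apply, mul_add, mul_sub, Finset.mul_sum, Finset.mul_sum, Finset.mul_sum]
  have e2 : (∑ r ∈ Finset.univ.filter (fun r : Fin n => n₁ ≤ (r : ℕ) ∧ (r : ℕ) < n₂),
        pderiv (Sum.inl r) (pderiv (Sum.inr r) (q * f)))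
      = ∑ r ∈ Finset.univ.filter (fun r : Fin n => n₁ ≤ (r : ℕ) ∧ (r : ℕ) < n₂),
          q * pderiv (Sum.inl r) (pderiv (Sum.inr r) f) := by
    refine Finset.sum_congr rfl fun r hr => ?_
    simp only [Finset.mem_filter, Finset.mem_univ, true_and] at hr
    have hy : pderiv (Sum.inr r) q = 0 := by
      rw [hqdef, map_sub, pderiv_mul, pderiv_mul,
        pderiv_X_of_ne (show (Sum.inl i₁' : Fin n ⊕ Fin n) ≠ Sum.inr r by simp),
        pderiv_X_of_ne (show (Sum.inr i₁ : Fin n ⊕ Fin n) ≠ Sum.inr r by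
          simp only [ne_eq, Sum.inr.injEq]; intro h; subst h; omega),
        pderiv_X_of_ne (show (Sum.inl i₁ : Fin n ⊕ Fin n) ≠ Sum.inr r by simp),
        pderiv_X_of_ne (show (Sum.inr i₁' : Fin n ⊕ Fin n) ≠ Sum.inr r by
          simp only [ne_eq, Sum.inr.injEq]; intro h; subst h; omega)]
      ring
    have hx : pderiv (Sum.inl r) q = 0 := by
      rw [hqdef, map_sub, pderiv_mul, pderiv_mul,
        pderiv_X_of_ne (show (Sum.inl i₁' : Fin n ⊕ Fin n) ≠ Sum.inl r by
          simp only [ne_eq, Sum.inl.injEq]; intro h; subst h; omega),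
        pderiv_X_of_ne (show (Sum.inr i₁ : Fin n ⊕ Fin n) ≠ Sum.inl r by simp),
        pderiv_X_of_ne (show (Sum.inl i₁ : Fin n ⊕ Fin n) ≠ Sum.inl r by
          simp only [ne_eq, Sum.inl.injEq]; intro h; subst h; omega),
        pderiv_X_of_ne (show (Sum.inr i₁' : Fin n ⊕ Fin n) ≠ Sum.inl r by simp)]
      ring
    rw [pderiv_mul, hy, zero_mul, zero_add, pderiv_mul, hx, zero_mul, zero_add]
  have e3 : (∑ s ∈ Finset.univ.filter (fun s : Fin n => n₂ ≤ (s : ℕ)),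
        X (Sum.inr s) * pderiv (Sum.inl s) (q * f))
      = ∑ s ∈ Finset.univ.filter (fun s : Fin n => n₂ ≤ (s : ℕ)),
          q * (X (Sum.inr s) * pderiv (Sum.inl s) f) := by
    refine Finset.sum_congr rfl fun s hs => ?_
    simp only [Finset.mem_filter, Finset.mem_univ, true_and] at hs
    have hx : pderiv (Sum.inl s) q = 0 := by
      rw [hqdef, map_sub, pderiv_mul, pderiv_mul,
        pderiv_X_of_ne (show (Sum.inl i₁' : Fin n ⊕ Fin n) ≠ Sum.inl s by
          simp only [ne_eq, Sum.inl.injEq]; intro h; subst h; omega),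
        pderiv_X_of_ne (show (Sum.inr i₁ : Fin n ⊕ Fin n) ≠ Sum.inl s by simp),
        pderiv_X_of_ne (show (Sum.inl i₁ : Fin n ⊕ Fin n) ≠ Sum.inl s by
          simp only [ne_eq, Sum.inl.injEq]; intro h; subst h; omega),
        pderiv_X_of_ne (show (Sum.inr i₁' : Fin n ⊕ Fin n) ≠ Sum.inl s by simp)]
      ring
    rw [pderiv_mul, hx, zero_mul, zero_add]
    ring
  have step : ∀ i : Fin n, X (Sum.inl i) * pderiv (Sum.inr i) (q * f)
      = q * (X (Sum.inl i) * pderiv (Sum.inr i) f)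
        + ((if i₁ = i then X (Sum.inl i) * (X (Sum.inl i₁') * f) else 0)
           - (if i₁' = i then X (Sum.inl i) * (X (Sum.inl i₁) * f) else 0)) := by
    intro i
    have hq : pderiv (Sum.inr i) q
        = (if i₁ = i then X (Sum.inl i₁') else 0) - (if i₁' = i then X (Sum.inl i₁) else 0) := by
      rw [hqdef, map_sub, pderiv_mul, pderiv_mul,
        pderiv_X_of_ne (show (Sum.inl i₁' : Fin n ⊕ Fin n) ≠ Sum.inr i by simp),
        pderiv_X_of_ne (show (Sum.inl i₁ : Fin n ⊕ Fin n) ≠ Sum.inr i by simp)]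
      simp only [pderiv_X, Pi.single_apply, Sum.inr.injEq]
      split_ifs <;> ring
    rw [pderiv_mul, hq]
    split_ifs <;> ring
  rw [Finset.sum_congr rfl fun i _ => step i, Finset.sum_add_distrib, Finset.sum_sub_distrib,
    Finset.sum_ite_eq _ i₁ _, Finset.sum_ite_eq _ i₁' _,
    if_pos (show i₁ ∈ Finset.univ.filter (fun i : Fin n => (i : ℕ) < n₁) by simp [hi₁]),
    if_pos (show i₁' ∈ Finset.univ.filter (fun i : Fin n => (i : ℕ) < n₁) by simp [hi₁']),
    e2, e3]
  ring


/-- if `h` is `Δ̃`-harmonic, then so is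
`(x_{i₁'}y_{i₁} − x_{i₁}y_{i₁'})·(x_{j₁'}∂_{y_{j₁}} − x_{j₁}∂_{y_{j₁'}})(h)`,
for `i₁, i₁' ∈ {1,...,n₁}` and `j₁, j₁' ∈ {n₁+1,...,n₂}`. -/
theorem harmonic_preserved (h₁ : 1 ≤ n₁) (h₁₂ : n₁ < n₂) (h₂ : n₂ ≤ n)
    (i₁ i₁' j₁ j₁' : Fin n)
    (hi₁ : (i₁ : ℕ) < n₁) (hi₁' : (i₁' : ℕ) < n₁)
    (hj₁ : n₁ ≤ (j₁ : ℕ) ∧ (j₁ : ℕ) < n₂) (hj₁' : n₁ ≤ (j₁' : ℕ) ∧ (j₁' : ℕ) < n₂)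
    (h : A F n) (hh : lap F n n₁ n₂ h = 0) :
    lap F n n₁ n₂
      ((xv F n i₁' * yv F n i₁ - xv F n i₁ * yv F n i₁') *
        ((mul F n (xv F n j₁') * pdy F n j₁ - mul F n (xv F n j₁) * pdy F n j₁') h)) = 0 := by
  have hT : (mul F n (xv F n j₁') * pdy F n j₁ - mul F n (xv F n j₁) * pdy F n j₁') h
      = X (Sum.inl j₁') * pderiv (Sum.inr j₁) h - X (Sum.inl j₁) * pderiv (Sum.inr j₁') h := by
    simp [mul, pdy, xv, LinearMap.sub_apply, Module.End.mul_apply, LinearMap.mulLeft_apply]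
  rw [hT, show xv F n i₁' * yv F n i₁ - xv F n i₁ * yv F n i₁'
      = X (Sum.inl i₁') * X (Sum.inr i₁) - X (Sum.inl i₁) * X (Sum.inr i₁') from rfl,
    lap_qmul F n n₁ n₂ h₁₂.le i₁ i₁' hi₁ hi₁', map_sub,
    lap_xmul F n n₁ n₂ j₁' hj₁', lap_xmul F n n₁ n₂ j₁ hj₁,
    lap_pdy F n n₁ n₂ j₁ hj₁.2, lap_pdy F n n₁ n₂ j₁' hj₁'.2, hh, map_zero, map_zero,
    pd_comm' (Sum.inr j₁') (Sum.inr j₁)]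
  ring


end Stmt19
end
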